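/- arXiv:1308.6623 — 5 statements merged into one kernel-verified Lean document; each statement's English description precedes it below -/
import Mathlib

section
/- Let l, m ≥ 1 and let Q : ℝ × ℝ → M_{l×m}(ℂ) and R : ℝ × ℝ → M_{m×l}(ℂ) be smooth functions of (x,t). Then the zero-curvature condition ∂_t U(ζ) − ∂_x V(ζ) + U(ζ)V(ζ) − V(ζ)U(ζ) = 0 holds for every ζ ∈ ℂ if and only if (Q,R) satisfies the matrix NLS system i Q_t + Q_xx − 2 Q R Q = 0, i R_t − R_xx + 2 R Q R = 0. -/
open Matrix Complex

noncomputable section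

/-- Entrywise partial derivative in the first (space) variable. -/
def pdx {n p : Type*} (Q : ℝ → ℝ → Matrix n p ℂ) : ℝ → ℝ → Matrix n p ℂ :=
  fun x t => Matrix.of fun i j => deriv (fun x' => Q x' t i j) x

/-- Entrywise partial derivative in the second (time) variable. -/
def pdt {n p : Type*} (Q : ℝ → ℝ → Matrix n p ℂ) : ℝ → ℝ → Matrix n p ℂ :=
  fun x t => Matrix.of fun i j => deriv (fun t' => Q x t' i j) t

/-- Entrywise joint smoothness in (x,t). -/
def SmoothM {n p : Type*} (Q : ℝ → ℝ → Matrix n p ℂ) : Prop :=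
  ∀ i j, ContDiff ℝ (⊤ : ℕ∞) (fun q : ℝ × ℝ => Q q.1 q.2 i j)

/-- The matrix NLS system `i Q_t + Q_xx - 2QRQ = 0`, `i R_t - R_xx + 2RQR = 0`. -/
def MatrixNLS {l m : Type*} [Fintype l] [Fintype m]
    (Q : ℝ → ℝ → Matrix l m ℂ) (R : ℝ → ℝ → Matrix m l ℂ) : Prop :=
  (∀ x t : ℝ, Complex.I • pdt Q x t + pdx (pdx Q) x t
      - (2 : ℂ) • (Q x t * R x t * Q x t) = 0) ∧
  (∀ x t : ℝ, Complex.I • pdt R x t - pdx (pdx R) x t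
      + (2 : ℂ) • (R x t * Q x t * R x t) = 0)

/-- The spatial Lax matrix `U(ζ)`. -/
def LaxU {l m : Type*} [DecidableEq l] [DecidableEq m] (ζ : ℂ)
    (Q : ℝ → ℝ → Matrix l m ℂ) (R : ℝ → ℝ → Matrix m l ℂ) :
    ℝ → ℝ → Matrix (l ⊕ m) (l ⊕ m) ℂ :=
  fun x t => Matrix.fromBlocks ((-(Complex.I * ζ)) • 1) (Q x t) (R x t) ((Complex.I * ζ) • 1)

/-- The temporal Lax matrix `V(ζ)`. -/
def LaxV {l m : Type*} [Fintype l] [Fintype m] [DecidableEq l] [DecidableEq m] (ζ : ℂ)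
    (Q : ℝ → ℝ → Matrix l m ℂ) (R : ℝ → ℝ → Matrix m l ℂ) :
    ℝ → ℝ → Matrix (l ⊕ m) (l ⊕ m) ℂ :=
  fun x t => Matrix.fromBlocks
    ((-(2 * Complex.I * ζ ^ 2)) • 1 - Complex.I • (Q x t * R x t))
    ((2 * ζ) • Q x t + Complex.I • pdx Q x t)
    ((2 * ζ) • R x t - Complex.I • pdx R x t)
    ((2 * Complex.I * ζ ^ 2) • 1 + Complex.I • (R x t * Q x t))

/-- `Ψ` is a linear eigenfunction of the Lax pair at `ζ`. -/
def IsLaxEigen {l m p : Type*} [Fintype l] [Fintype m] [DecidableEq l] [DecidableEq m] (ζ : ℂ)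
    (Q : ℝ → ℝ → Matrix l m ℂ) (R : ℝ → ℝ → Matrix m l ℂ)
    (Ψ : ℝ → ℝ → Matrix (l ⊕ m) p ℂ) : Prop :=
  (∀ x t : ℝ, pdx Ψ x t = LaxU ζ Q R x t * Ψ x t) ∧
  (∀ x t : ℝ, pdt Ψ x t = LaxV ζ Q R x t * Ψ x t)

/-- `Φ` is an adjoint linear eigenfunction of the Lax pair at `ζ`. -/
def IsAdjLaxEigen {l m p : Type*} [Fintype l] [Fintype m] [DecidableEq l] [DecidableEq m] (ζ : ℂ)
    (Q : ℝ → ℝ → Matrix l m ℂ) (R : ℝ → ℝ → Matrix m l ℂ)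
    (Φ : ℝ → ℝ → Matrix p (l ⊕ m) ℂ) : Prop :=
  (∀ x t : ℝ, pdx Φ x t = -(Φ x t * LaxU ζ Q R x t)) ∧
  (∀ x t : ℝ, pdt Φ x t = -(Φ x t * LaxV ζ Q R x t))

section Aux

variable {n p q : Type*}

/-- Entrywise differentiability in `x` at a point. -/
def DX (A : ℝ → ℝ → Matrix n p ℂ) (x t : ℝ) : Prop :=
  ∀ i j, DifferentiableAt ℝ (fun x' => A x' t i j) x

lemma DX.const (C : Matrix n p ℂ) (x t : ℝ) : DX (fun _ _ => C) x t :=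
  fun _ _ => differentiableAt_const _

lemma DX.add {A B : ℝ → ℝ → Matrix n p ℂ} {x t : ℝ} (hA : DX A x t) (hB : DX B x t) :
    DX (fun x t => A x t + B x t) x t := by
  intro i j
  simpa [Matrix.add_apply] using (hA i j).fun_add (hB i j)

lemma DX.sub {A B : ℝ → ℝ → Matrix n p ℂ} {x t : ℝ} (hA : DX A x t) (hB : DX B x t) :
    DX (fun x t => A x t - B x t) x t := by
  intro i j
  simpa [Matrix.sub_apply] using (hA i j).fun_sub (hB i j)

lemma DX.smul {A : ℝ → ℝ → Matrix n p ℂ} {x t : ℝ} (c : ℂ) (hA : DX A x t) :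
    DX (fun x t => c • A x t) x t := by
  intro i j
  simpa [Matrix.smul_apply, smul_eq_mul] using (hA i j).const_mul c

lemma DX.mul [Fintype p] {A : ℝ → ℝ → Matrix n p ℂ} {B : ℝ → ℝ → Matrix p q ℂ} {x t : ℝ}
    (hA : DX A x t) (hB : DX B x t) : DX (fun x t => A x t * B x t) x t := by
  intro i j
  have : (fun x' => (A x' t * B x' t) i j) = fun x' => ∑ k, A x' t i k * B x' t k j := by
    funext x'; simp [Matrix.mul_apply]
  rw [this]
  exact DifferentiableAt.fun_sum fun k _ => (hA i k).mul (hB k j)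

lemma pdx_const (C : Matrix n p ℂ) (x t : ℝ) : pdx (fun _ _ => C) x t = 0 := by
  ext i j; simp [pdx]

lemma pdx_add {A B : ℝ → ℝ → Matrix n p ℂ} {x t : ℝ} (hA : DX A x t) (hB : DX B x t) :
    pdx (fun x t => A x t + B x t) x t = pdx A x t + pdx B x t := by
  ext i j
  simp only [pdx, Matrix.of_apply, Matrix.add_apply]
  exact deriv_add (hA i j) (hB i j)

lemma pdx_sub {A B : ℝ → ℝ → Matrix n p ℂ} {x t : ℝ} (hA : DX A x t) (hB : DX B x t) :
    pdx (fun x t => A x t - B x t) x t = pdx A x t - pdx B x t := by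
  ext i j
  simp only [pdx, Matrix.of_apply, Matrix.sub_apply]
  exact deriv_sub (hA i j) (hB i j)

lemma pdx_smul (c : ℂ) (A : ℝ → ℝ → Matrix n p ℂ) (x t : ℝ) :
    pdx (fun x t => c • A x t) x t = c • pdx A x t := by
  ext i j
  simp only [pdx, Matrix.of_apply, Matrix.smul_apply, smul_eq_mul]
  exact deriv_const_mul_field c

lemma pdx_mul [Fintype p] {A : ℝ → ℝ → Matrix n p ℂ} {B : ℝ → ℝ → Matrix p q ℂ} {x t : ℝ}
    (hA : DX A x t) (hB : DX B x t) :
    pdx (fun x t => A x t * B x t) x t = pdx A x t * B x t + A x t * pdx B x t := by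
  ext i j
  simp only [pdx, Matrix.of_apply, Matrix.add_apply, Matrix.mul_apply]
  have h1 : (fun x' => ∑ k, A x' t i k * B x' t k j) =
      fun x' => ∑ k, (fun x'' => A x'' t i k * B x'' t k j) x' := rfl
  rw [h1, deriv_fun_sum (fun k _ => (hA i k).fun_mul (hB k j)), ← Finset.sum_add_distrib]
  refine Finset.sum_congr rfl fun k _ => ?_
  exact deriv_mul (hA i k) (hB k j)

lemma pdx_fromBlocks {n' p' : Type*} (A : ℝ → ℝ → Matrix n p ℂ) (B : ℝ → ℝ → Matrix n p' ℂ)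
    (C : ℝ → ℝ → Matrix n' p ℂ) (D : ℝ → ℝ → Matrix n' p' ℂ) (x t : ℝ) :
    pdx (fun x t => Matrix.fromBlocks (A x t) (B x t) (C x t) (D x t)) x t =
      Matrix.fromBlocks (pdx A x t) (pdx B x t) (pdx C x t) (pdx D x t) := by
  ext (i | i) (j | j) <;> simp [pdx, Matrix.fromBlocks]

lemma pdt_fromBlocks {n' p' : Type*} (A : ℝ → ℝ → Matrix n p ℂ) (B : ℝ → ℝ → Matrix n p' ℂ)
    (C : ℝ → ℝ → Matrix n' p ℂ) (D : ℝ → ℝ → Matrix n' p' ℂ) (x t : ℝ) :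
    pdt (fun x t => Matrix.fromBlocks (A x t) (B x t) (C x t) (D x t)) x t =
      Matrix.fromBlocks (pdt A x t) (pdt B x t) (pdt C x t) (pdt D x t) := by
  ext (i | i) (j | j) <;> simp [pdt, Matrix.fromBlocks]

lemma pdt_const (C : Matrix n p ℂ) (x t : ℝ) : pdt (fun _ _ => C) x t = 0 := by
  ext i j; simp [pdt]

/-- The `x`-partial of a jointly smooth function is jointly smooth. -/
lemma contDiff_pdx_scalar {F : ℝ × ℝ → ℂ} (h : ContDiff ℝ (⊤ : ℕ∞) F) :
    ContDiff ℝ (⊤ : ℕ∞) (fun q : ℝ × ℝ => deriv (fun x' => F (x', q.2)) q.1) := by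
  have key : ∀ q : ℝ × ℝ, deriv (fun x' => F (x', q.2)) q.1 =
      fderiv ℝ F q ((1 : ℝ), (0 : ℝ)) := by
    intro q
    have h1 : HasDerivAt (fun x' : ℝ => ((x', q.2) : ℝ × ℝ)) ((1 : ℝ), (0 : ℝ)) q.1 :=
      (hasDerivAt_id q.1).prodMk (hasDerivAt_const q.1 q.2)
    have h2 := ((h.differentiable (by simp)) q).hasFDerivAt.comp_hasDerivAt q.1 h1
    exact h2.deriv
  simp only [key]
  exact (h.fderiv_right (by simp)).clm_apply contDiff_const

lemma DX_of_smooth {A : ℝ → ℝ → Matrix n p ℂ} (hA : SmoothM A) (x t : ℝ) : DX A x t := by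
  intro i j
  have := ((hA i j).differentiable (by simp)).comp
    ((differentiable_id.prodMk (differentiable_const t)) : Differentiable ℝ fun x' : ℝ => (x', t))
  exact this.differentiableAt

lemma DX_pdx_of_smooth {A : ℝ → ℝ → Matrix n p ℂ} (hA : SmoothM A) (x t : ℝ) :
    DX (pdx A) x t := by
  intro i j
  have h1 : ContDiff ℝ (⊤ : ℕ∞) (fun q : ℝ × ℝ => deriv (fun x' => A x' q.2 i j) q.1) :=
    contDiff_pdx_scalar (hA i j)
  have h2 : (fun x' => pdx A x' t i j) =
      (fun q : ℝ × ℝ => deriv (fun x'' => A x'' q.2 i j) q.1) ∘ fun x' : ℝ => (x', t) := by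
    funext x'; simp [pdx]
  rw [h2]
  exact ((h1.differentiable (by simp)).comp
    (differentiable_id.prodMk (differentiable_const t))).differentiableAt

end Aux

/-- The curvature computation: the zero-curvature expression equals an explicit
block matrix carrying the NLS residuals. -/
lemma curvature_eq {l m : ℕ} (ζ : ℂ) (Q : ℝ → ℝ → Matrix (Fin l) (Fin m) ℂ)
    (R : ℝ → ℝ → Matrix (Fin m) (Fin l) ℂ) (hQ : SmoothM Q) (hR : SmoothM R) (x t : ℝ) :
    pdt (LaxU ζ Q R) x t - pdx (LaxV ζ Q R) x t
        + LaxU ζ Q R x t * LaxV ζ Q R x t - LaxV ζ Q R x t * LaxU ζ Q R x t =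
      Matrix.fromBlocks 0
        (pdt Q x t - Complex.I • pdx (pdx Q) x t
          + (2 * Complex.I) • (Q x t * (R x t * Q x t)))
        (pdt R x t + Complex.I • pdx (pdx R) x t
          - (2 * Complex.I) • (R x t * (Q x t * R x t))) 0 := by
  have hQd : DX Q x t := DX_of_smooth hQ x t
  have hRd : DX R x t := DX_of_smooth hR x t
  have hQxd : DX (pdx Q) x t := DX_pdx_of_smooth hQ x t
  have hRxd : DX (pdx R) x t := DX_pdx_of_smooth hR x t
  have hU : pdt (LaxU ζ Q R) x t =
      Matrix.fromBlocks 0 (pdt Q x t) (pdt R x t) 0 := by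
    rw [show LaxU ζ Q R = fun x t => Matrix.fromBlocks ((-(Complex.I * ζ)) • (1 : Matrix (Fin l) (Fin l) ℂ))
        (Q x t) (R x t) ((Complex.I * ζ) • (1 : Matrix (Fin m) (Fin m) ℂ)) from rfl,
      pdt_fromBlocks]
    rw [pdt_const ((-(Complex.I * ζ)) • (1 : Matrix (Fin l) (Fin l) ℂ)),
      pdt_const ((Complex.I * ζ) • (1 : Matrix (Fin m) (Fin m) ℂ))]
  have hV : pdx (LaxV ζ Q R) x t =
      Matrix.fromBlocks
        (-(Complex.I • (pdx Q x t * R x t + Q x t * pdx R x t)))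
        ((2 * ζ) • pdx Q x t + Complex.I • pdx (pdx Q) x t)
        ((2 * ζ) • pdx R x t - Complex.I • pdx (pdx R) x t)
        (Complex.I • (pdx R x t * Q x t + R x t * pdx Q x t)) := by
    rw [show LaxV ζ Q R = fun x t => Matrix.fromBlocks
        ((-(2 * Complex.I * ζ ^ 2)) • (1 : Matrix (Fin l) (Fin l) ℂ) - Complex.I • (Q x t * R x t))
        ((2 * ζ) • Q x t + Complex.I • pdx Q x t)
        ((2 * ζ) • R x t - Complex.I • pdx R x t)
        ((2 * Complex.I * ζ ^ 2) • (1 : Matrix (Fin m) (Fin m) ℂ) + Complex.I • (R x t * Q x t))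
      from rfl, pdx_fromBlocks]
    refine Matrix.fromBlocks_inj.mpr ⟨?_, ?_, ?_, ?_⟩
    · rw [pdx_sub (DX.const _ x t) (DX.smul _ (hQd.mul hRd)), pdx_const, pdx_smul,
        pdx_mul hQd hRd]
      simp
    · rw [pdx_add (DX.smul _ hQd) (DX.smul _ hQxd), pdx_smul, pdx_smul]
    · rw [pdx_sub (DX.smul _ hRd) (DX.smul _ hRxd), pdx_smul, pdx_smul]
    · rw [pdx_add (DX.const _ x t) (DX.smul _ (hRd.mul hQd)), pdx_const, pdx_smul,
        pdx_mul hRd hQd]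
      simp
  rw [hU, hV, LaxU, LaxV]
  simp only [Matrix.fromBlocks_multiply, sub_eq_add_neg, Matrix.fromBlocks_neg,
    Matrix.fromBlocks_add, Matrix.fromBlocks_inj]
  refine ⟨?_, ?_, ?_, ?_⟩ <;>
    simp only [Matrix.mul_add, Matrix.add_mul, Matrix.mul_sub, Matrix.sub_mul,
      Matrix.smul_mul, Matrix.mul_smul, Matrix.neg_mul, Matrix.mul_neg,
      smul_smul, Matrix.mul_one, Matrix.one_mul, Matrix.mul_assoc,
      smul_add, smul_sub, smul_neg, neg_add, neg_sub, neg_neg] <;>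
    match_scalars
  all_goals try ring_nf
  all_goals try simp only [Complex.I_sq]
  all_goals ring

lemma nls1_aux {n p : Type*} (a b c : Matrix n p ℂ) :
    Complex.I • (a - Complex.I • b + (2 * Complex.I) • c) =
      Complex.I • a + b - (2 : ℂ) • c := by
  ext i j
  simp only [Matrix.smul_apply, Matrix.add_apply, Matrix.sub_apply, smul_eq_mul]
  linear_combination (-(b i j) + 2 * c i j) * Complex.I_sq

lemma nls2_aux {n p : Type*} (a b c : Matrix n p ℂ) :
    Complex.I • (a + Complex.I • b - (2 * Complex.I) • c) =
      Complex.I • a - b + (2 : ℂ) • c := by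
  ext i j
  simp only [Matrix.smul_apply, Matrix.add_apply, Matrix.sub_apply, smul_eq_mul]
  linear_combination (b i j - 2 * c i j) * Complex.I_sq

/-- the zero-curvature condition `U_t - V_x + UV - VU = 0` holds for every
`ζ ∈ ℂ` if and only if `(Q,R)` solves the matrix NLS system. -/
theorem zero_curvature_iff_matrixNLS {l m : ℕ} (hl : 1 ≤ l) (hm : 1 ≤ m)
    (Q : ℝ → ℝ → Matrix (Fin l) (Fin m) ℂ) (R : ℝ → ℝ → Matrix (Fin m) (Fin l) ℂ)
    (hQ : SmoothM Q) (hR : SmoothM R) :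
    (∀ ζ : ℂ, ∀ x t : ℝ,
        pdt (LaxU ζ Q R) x t - pdx (LaxV ζ Q R) x t
          + LaxU ζ Q R x t * LaxV ζ Q R x t - LaxV ζ Q R x t * LaxU ζ Q R x t = 0)
      ↔ MatrixNLS Q R := by
  constructor
  · intro h
    constructor
    · intro x t
      have h0 := h 0 x t
      rw [curvature_eq 0 Q R hQ hR x t, ← Matrix.fromBlocks_zero,
        Matrix.fromBlocks_inj] at h0
      rw [show Q x t * R x t * Q x t = Q x t * (R x t * Q x t) from Matrix.mul_assoc _ _ _,
        ← nls1_aux, h0.2.1, smul_zero]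
    · intro x t
      have h0 := h 0 x t
      rw [curvature_eq 0 Q R hQ hR x t, ← Matrix.fromBlocks_zero,
        Matrix.fromBlocks_inj] at h0
      rw [show R x t * Q x t * R x t = R x t * (Q x t * R x t) from Matrix.mul_assoc _ _ _,
        ← nls2_aux, h0.2.2.1, smul_zero]
  · rintro ⟨h1, h2⟩ ζ x t
    rw [curvature_eq ζ Q R hQ hR x t]
    have e1 : pdt Q x t - Complex.I • pdx (pdx Q) x t
        + (2 * Complex.I) • (Q x t * (R x t * Q x t)) = 0 := by
      have hE : Complex.I • (pdt Q x t - Complex.I • pdx (pdx Q) x t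
          + (2 * Complex.I) • (Q x t * (R x t * Q x t))) = 0 := by
        rw [nls1_aux, ← Matrix.mul_assoc]
        exact h1 x t
      exact (smul_eq_zero.mp hE).resolve_left Complex.I_ne_zero
    have e2 : pdt R x t + Complex.I • pdx (pdx R) x t
        - (2 * Complex.I) • (R x t * (Q x t * R x t)) = 0 := by
      have hE : Complex.I • (pdt R x t + Complex.I • pdx (pdx R) x t
          - (2 * Complex.I) • (R x t * (Q x t * R x t))) = 0 := by
        rw [nls2_aux, ← Matrix.mul_assoc]
        exact h2 x t
      exact (smul_eq_zero.mp hE).resolve_left Complex.I_ne_zero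
    rw [e1, e2, Matrix.fromBlocks_zero]
end
end

section
/- Let ζ ∈ ℂ, let Q : ℝ × ℝ → M_{l×m}(ℂ), R : ℝ × ℝ → M_{m×l}(ℂ) be smooth, and let (Ψ₁,Ψ₂) with Ψ₁ : ℝ × ℝ → M_{l×l}(ℂ) invertible at every point and Ψ₂ : ℝ × ℝ → M_{m×l}(ℂ) satisfy the Lax pair Ψ_x = U(ζ)Ψ, Ψ_t = V(ζ)Ψ. Then R̃ := Ψ₂ Ψ₁⁻¹ satisfies the two relations R = R̃_x − 2iζ R̃ + R̃ Q R̃ and R̃_t = 2ζ R − i R_x + 4iζ² R̃ + i R Q R̃ + i R̃ Q R − 2ζ R̃ Q R̃ − i R̃ Q_x R̃. -/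
open Matrix Complex

noncomputable section

namespace RtildeAux

/-- Entrywise derivative of a one-parameter matrix family. -/
def mder {n p : Type*} (M : ℝ → Matrix n p ℂ) (x : ℝ) : Matrix n p ℂ :=
  Matrix.of fun i j => deriv (fun s => M s i j) x

lemma mder_mul {n p q : Type*} [Fintype p] {A : ℝ → Matrix n p ℂ} {B : ℝ → Matrix p q ℂ} {x : ℝ}
    (hA : ∀ i j, DifferentiableAt ℝ (fun s => A s i j) x)
    (hB : ∀ i j, DifferentiableAt ℝ (fun s => B s i j) x) :
    mder (fun s => A s * B s) x = mder A x * B x + A x * mder B x := by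
  ext i j
  simp only [mder, Matrix.of_apply, Matrix.add_apply, Matrix.mul_apply]
  rw [deriv_fun_sum (A := fun k s => A s i k * B s k j) fun k _ => (hA i k).mul (hB k j), ← Finset.sum_add_distrib]
  exact Finset.sum_congr rfl fun k _ => deriv_fun_mul (hA i k) (hB k j)

lemma det_diffAt {n : ℕ} {M : ℝ → Matrix (Fin n) (Fin n) ℂ} {x : ℝ}
    (h : ∀ i j, DifferentiableAt ℝ (fun s => M s i j) x) :
    DifferentiableAt ℝ (fun s => (M s).det) x := by
  simp only [Matrix.det_apply]
  refine DifferentiableAt.fun_sum fun σ _ => ?_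
  have : DifferentiableAt ℝ (fun s => ∏ i, M s (σ i) i) x :=
    DifferentiableAt.fun_finsetProd fun i _ => h _ _
  simpa [Units.smul_def, zsmul_eq_mul] using this.const_mul ((Equiv.Perm.sign σ : ℤ) : ℂ)

lemma inv_entry_diffAt {n : ℕ} {M : ℝ → Matrix (Fin n) (Fin n) ℂ} {x : ℝ}
    (h : ∀ i j, DifferentiableAt ℝ (fun s => M s i j) x)
    (hu : IsUnit (M x)) (i j : Fin n) :
    DifferentiableAt ℝ (fun s => (M s)⁻¹ i j) x := by
  have hne : (M x).det ≠ 0 := ((Matrix.isUnit_iff_isUnit_det _).mp hu).ne_zero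
  have hadj : DifferentiableAt ℝ (fun s => (M s).adjugate i j) x := by
    simp only [Matrix.adjugate_apply]
    refine det_diffAt fun i' j' => ?_
    by_cases hij : i' = j
    · simp only [Matrix.updateRow_apply, if_pos hij]
      exact differentiableAt_const _
    · simp only [Matrix.updateRow_apply, if_neg hij]
      exact h i' j'
  have hfun : (fun s => (M s)⁻¹ i j) = fun s => ((M s).det)⁻¹ * (M s).adjugate i j := by
    funext s
    rw [Matrix.inv_def, Ring.inverse_eq_inv']
    simp [Matrix.smul_apply, smul_eq_mul]
  rw [hfun]
  exact ((det_diffAt h).inv hne).mul hadj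

lemma mder_inv {n : ℕ} {A : ℝ → Matrix (Fin n) (Fin n) ℂ} {x : ℝ}
    (hA : ∀ i j, DifferentiableAt ℝ (fun s => A s i j) x)
    (hu : ∀ s, IsUnit (A s)) :
    mder (fun s => (A s)⁻¹) x = -((A x)⁻¹ * (mder A x * (A x)⁻¹)) := by
  have hdet : ∀ s, IsUnit (A s).det := fun s => (Matrix.isUnit_iff_isUnit_det _).mp (hu s)
  have hP : ∀ i j, DifferentiableAt ℝ (fun s => (A s)⁻¹ i j) x :=
    inv_entry_diffAt hA (hu x)
  have hconst : mder (fun s => A s * (A s)⁻¹) x = 0 := by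
    rw [show (fun s => A s * (A s)⁻¹) = fun _ => (1 : Matrix (Fin n) (Fin n) ℂ) from
      funext fun s => Matrix.mul_nonsing_inv _ (hdet s)]
    ext i j
    simp [mder]
  have h2 : mder A x * (A x)⁻¹ + A x * mder (fun s => (A s)⁻¹) x = 0 := by
    rw [← mder_mul hA hP, hconst]
  have h3 : A x * mder (fun s => (A s)⁻¹) x = -(mder A x * (A x)⁻¹) :=
    eq_neg_of_add_eq_zero_right h2
  calc mder (fun s => (A s)⁻¹) x
      = (A x)⁻¹ * (A x * mder (fun s => (A s)⁻¹) x) := by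
        rw [← mul_assoc, Matrix.nonsing_inv_mul _ (hdet x), one_mul]
    _ = -((A x)⁻¹ * (mder A x * (A x)⁻¹)) := by rw [h3, mul_neg]

lemma mder_BP {n m : ℕ} {A : ℝ → Matrix (Fin n) (Fin n) ℂ} {B : ℝ → Matrix (Fin m) (Fin n) ℂ}
    {x : ℝ}
    (hA : ∀ i j, DifferentiableAt ℝ (fun s => A s i j) x)
    (hB : ∀ i j, DifferentiableAt ℝ (fun s => B s i j) x)
    (hu : ∀ s, IsUnit (A s)) :
    mder (fun s => B s * (A s)⁻¹) x
      = mder B x * (A x)⁻¹ - B x * (A x)⁻¹ * mder A x * (A x)⁻¹ := by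
  have hP : ∀ i j, DifferentiableAt ℝ (fun s => (A s)⁻¹ i j) x :=
    inv_entry_diffAt hA (hu x)
  rw [mder_mul hB hP, mder_inv hA hu, Matrix.mul_neg, ← sub_eq_add_neg, Matrix.mul_assoc, Matrix.mul_assoc]

end RtildeAux

/-- for a linear eigenfunction `(Ψ₁,Ψ₂)` at `ζ` with `Ψ₁` invertible
everywhere, `R̃ := Ψ₂ Ψ₁⁻¹` satisfies `R = R̃_x - 2iζ R̃ + R̃ Q R̃` and the stated
evolution equation. -/
theorem Rtilde_relations {l m : ℕ} (ζ : ℂ)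
    (Q : ℝ → ℝ → Matrix (Fin l) (Fin m) ℂ) (R : ℝ → ℝ → Matrix (Fin m) (Fin l) ℂ)
    (hQ : SmoothM Q) (hR : SmoothM R)
    (Ψ₁ : ℝ → ℝ → Matrix (Fin l) (Fin l) ℂ) (Ψ₂ : ℝ → ℝ → Matrix (Fin m) (Fin l) ℂ)
    (hΨ₁ : SmoothM Ψ₁) (hΨ₂ : SmoothM Ψ₂)
    (hinv : ∀ x t : ℝ, IsUnit (Ψ₁ x t))
    (hΨ : IsLaxEigen ζ Q R (fun x t => Matrix.fromRows (Ψ₁ x t) (Ψ₂ x t)))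
    (Rt : ℝ → ℝ → Matrix (Fin m) (Fin l) ℂ)
    (hRt : ∀ x t : ℝ, Rt x t = Ψ₂ x t * (Ψ₁ x t)⁻¹) :
    (∀ x t : ℝ, R x t
        = pdx Rt x t - (2 * Complex.I * ζ) • Rt x t + Rt x t * Q x t * Rt x t) ∧
    (∀ x t : ℝ, pdt Rt x t
        = (2 * ζ) • R x t - Complex.I • pdx R x t + (4 * Complex.I * ζ ^ 2) • Rt x t
          + Complex.I • (R x t * Q x t * Rt x t) + Complex.I • (Rt x t * Q x t * R x t)
          - (2 * ζ) • (Rt x t * Q x t * Rt x t)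
          - Complex.I • (Rt x t * pdx Q x t * Rt x t)) := by
  have hAP : ∀ x t : ℝ, Ψ₁ x t * (Ψ₁ x t)⁻¹ = 1 := fun x t =>
    Matrix.mul_nonsing_inv _ ((Matrix.isUnit_iff_isUnit_det _).mp (hinv x t))
  have hRtfold : ∀ x t : ℝ, Ψ₂ x t * (Ψ₁ x t)⁻¹ = Rt x t := fun x t => (hRt x t).symm
  have hpfrx : ∀ x t : ℝ, pdx (fun x t => Matrix.fromRows (Ψ₁ x t) (Ψ₂ x t)) x t
      = Matrix.fromRows (pdx Ψ₁ x t) (pdx Ψ₂ x t) := by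
    intro x t; ext (i | i) j <;> rfl
  have hpfrt : ∀ x t : ℝ, pdt (fun x t => Matrix.fromRows (Ψ₁ x t) (Ψ₂ x t)) x t
      = Matrix.fromRows (pdt Ψ₁ x t) (pdt Ψ₂ x t) := by
    intro x t; ext (i | i) j <;> rfl
  have hbx : ∀ x t : ℝ,
      pdx Ψ₁ x t = ((-(Complex.I * ζ)) • (1 : Matrix (Fin l) (Fin l) ℂ)) * Ψ₁ x t
          + Q x t * Ψ₂ x t ∧
      pdx Ψ₂ x t = R x t * Ψ₁ x t
          + ((Complex.I * ζ) • (1 : Matrix (Fin m) (Fin m) ℂ)) * Ψ₂ x t := by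
    intro x t
    have h := hΨ.1 x t
    rw [hpfrx x t] at h
    simp only [LaxU] at h
    rw [Matrix.fromBlocks_mul_fromRows, Matrix.fromRows_ext_iff] at h
    exact h
  have hbt : ∀ x t : ℝ,
      pdt Ψ₁ x t = ((-(2 * Complex.I * ζ ^ 2)) • (1 : Matrix (Fin l) (Fin l) ℂ)
            - Complex.I • (Q x t * R x t)) * Ψ₁ x t
          + ((2 * ζ) • Q x t + Complex.I • pdx Q x t) * Ψ₂ x t ∧
      pdt Ψ₂ x t = ((2 * ζ) • R x t - Complex.I • pdx R x t) * Ψ₁ x t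
          + ((2 * Complex.I * ζ ^ 2) • (1 : Matrix (Fin m) (Fin m) ℂ)
            + Complex.I • (R x t * Q x t)) * Ψ₂ x t := by
    intro x t
    have h := hΨ.2 x t
    rw [hpfrt x t] at h
    simp only [LaxV] at h
    rw [Matrix.fromBlocks_mul_fromRows, Matrix.fromRows_ext_iff] at h
    exact h
  have e2x : ∀ x t : ℝ, pdx Rt x t
      = pdx Ψ₂ x t * (Ψ₁ x t)⁻¹ - Rt x t * pdx Ψ₁ x t * (Ψ₁ x t)⁻¹ := by
    intro x t
    have h0 : pdx Rt x t = RtildeAux.mder (fun s => Ψ₂ s t * (Ψ₁ s t)⁻¹) x := by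
      show RtildeAux.mder (fun s => Rt s t) x = _
      rw [show (fun s => Rt s t) = fun s => Ψ₂ s t * (Ψ₁ s t)⁻¹ from funext fun s => hRt s t]
    have h1 : ∀ i j, DifferentiableAt ℝ (fun s => Ψ₁ s t i j) x := fun i j => (((hΨ₁ i j).differentiable (by simp)).comp (differentiable_id.prodMk (differentiable_const t))).differentiableAt
    have h2 : ∀ i j, DifferentiableAt ℝ (fun s => Ψ₂ s t i j) x := fun i j => (((hΨ₂ i j).differentiable (by simp)).comp (differentiable_id.prodMk (differentiable_const t))).differentiableAt
    rw [h0, RtildeAux.mder_BP (A := fun s => Ψ₁ s t) (B := fun s => Ψ₂ s t)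
      h1 h2 (fun s => hinv s t), hRt x t]
    rfl
  have e2t : ∀ x t : ℝ, pdt Rt x t
      = pdt Ψ₂ x t * (Ψ₁ x t)⁻¹ - Rt x t * pdt Ψ₁ x t * (Ψ₁ x t)⁻¹ := by
    intro x t
    have h0 : pdt Rt x t = RtildeAux.mder (fun s => Ψ₂ x s * (Ψ₁ x s)⁻¹) t := by
      show RtildeAux.mder (fun s => Rt x s) t = _
      rw [show (fun s => Rt x s) = fun s => Ψ₂ x s * (Ψ₁ x s)⁻¹ from funext fun s => hRt x s]
    have h1 : ∀ i j, DifferentiableAt ℝ (fun s => Ψ₁ x s i j) t := fun i j => (((hΨ₁ i j).differentiable (by simp)).comp ((differentiable_const x).prodMk differentiable_id)).differentiableAt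
    have h2 : ∀ i j, DifferentiableAt ℝ (fun s => Ψ₂ x s i j) t := fun i j => (((hΨ₂ i j).differentiable (by simp)).comp ((differentiable_const x).prodMk differentiable_id)).differentiableAt
    rw [h0, RtildeAux.mder_BP (A := fun s => Ψ₁ x s) (B := fun s => Ψ₂ x s)
      h1 h2 (fun s => hinv x s), hRt x t]
    rfl
  constructor
  · intro x t
    obtain ⟨hx1, hx2⟩ := hbx x t
    rw [e2x x t, hx1, hx2]
    simp only [Matrix.add_mul, Matrix.sub_mul, Matrix.mul_add, Matrix.mul_sub,
      Matrix.smul_mul, Matrix.mul_smul, Matrix.mul_assoc, Matrix.one_mul,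
      hAP x t, Matrix.mul_one, hRtfold x t]
    module
  · intro x t
    obtain ⟨ht1, ht2⟩ := hbt x t
    rw [e2t x t, ht1, ht2]
    simp only [Matrix.add_mul, Matrix.sub_mul, Matrix.mul_add, Matrix.mul_sub,
      Matrix.smul_mul, Matrix.mul_smul, Matrix.mul_assoc, Matrix.one_mul,
      hAP x t, Matrix.mul_one, hRtfold x t]
    module
end
end

section
/- (Dressing of the eigenfunction under the binary Bäcklund–Darboux transformation.) Under the hypotheses of the binary Bäcklund–Darboux transformation (μ, ν ∈ ℂ; (Q,R) a smooth solution of the matrix NLS system; Ψ(μ) = (Ψ₁,Ψ₂) a linear eigenfunction at μ; Φ(ν) = (Φ₁,Φ₂) an adjoint linear eigenfunction at ν; K := Φ₁Ψ₁ + Φ₂Ψ₂ invertible everywhere; P := [Ψ₁;Ψ₂]K⁻¹[Φ₁,Φ₂]; Q' := Q + 2i(ν−μ)P₁₂, R' := R − 2i(ν−μ)P₂₁), let ζ ∈ ℂ with ζ ≠ ν, and let (χ₁, χ₂) be any solution of the Lax pair at ζ for the potentials (Q,R). Then the function (I_{l+m} − ((μ−ν)/(ζ−ν)) P)·[χ₁;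 χ₂] is a solution of the Lax pair at ζ for the potentials (Q', R'). -/
open Matrix Complex

noncomputable section

namespace NLSBD
set_option linter.unusedSectionVars false

open Matrix

variable {n p q : Type*} [Fintype n] [Fintype p] [Fintype q]

/-- entrywise derivative of a one-variable matrix function -/
def dd (f : ℝ → Matrix n p ℂ) (x : ℝ) : Matrix n p ℂ :=
  Matrix.of fun i j => deriv (fun y => f y i j) x

def DifAt (f : ℝ → Matrix n p ℂ) (x : ℝ) : Prop :=
  ∀ i j, DifferentiableAt ℝ (fun y => f y i j) x

omit [Fintype n] [Fintype p] in
theorem DifAt.add {f g : ℝ → Matrix n p ℂ} {x : ℝ} (hf : DifAt f x) (hg : DifAt g x) :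
    DifAt (fun y => f y + g y) x := fun i j => by
  simpa [Matrix.add_apply] using (hf i j).fun_add (hg i j)

omit [Fintype n] [Fintype p] in
theorem DifAt.sub {f g : ℝ → Matrix n p ℂ} {x : ℝ} (hf : DifAt f x) (hg : DifAt g x) :
    DifAt (fun y => f y - g y) x := fun i j => by
  simpa [Matrix.sub_apply] using (hf i j).fun_sub (hg i j)

omit [Fintype n] [Fintype p] in
theorem DifAt.smul {f : ℝ → Matrix n p ℂ} {x : ℝ} (hf : DifAt f x) (c : ℂ) :
    DifAt (fun y => c • f y) x := fun i j => by
  simpa [Matrix.smul_apply] using (hf i j).const_mul c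

omit [Fintype n] [Fintype p] in
theorem difat_const {C : Matrix n p ℂ} {x : ℝ} : DifAt (fun _ => C) x := fun _ _ =>
  differentiableAt_const _

omit [Fintype n] [Fintype q] in
theorem DifAt.mul {f : ℝ → Matrix n p ℂ} {g : ℝ → Matrix p q ℂ} {x : ℝ}
    (hf : DifAt f x) (hg : DifAt g x) : DifAt (fun y => f y * g y) x := by
  intro i j
  simp only [Matrix.mul_apply]
  exact DifferentiableAt.fun_sum fun k _ => (hf i k).fun_mul (hg k j)

omit [Fintype n] [Fintype q] in
theorem dd_mul {f : ℝ → Matrix n p ℂ} {g : ℝ → Matrix p q ℂ} {x : ℝ}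
    (hf : DifAt f x) (hg : DifAt g x) :
    dd (fun y => f y * g y) x = dd f x * g x + f x * dd g x := by
  ext i j
  simp only [dd, Matrix.of_apply, Matrix.add_apply, Matrix.mul_apply]
  rw [deriv_fun_sum (fun k _ => ((hf i k).fun_mul (hg k j)))]
  · simp only [deriv_fun_mul (hf _ _) (hg _ _)]
    rw [Finset.sum_add_distrib]

omit [Fintype n] [Fintype p] in
theorem dd_const (C : Matrix n p ℂ) (x : ℝ) : dd (fun _ => C) x = 0 := by
  ext i j; simp [dd]

omit [Fintype n] [Fintype p] in
theorem dd_add {f g : ℝ → Matrix n p ℂ} {x : ℝ} (hf : DifAt f x) (hg : DifAt g x) :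
    dd (fun y => f y + g y) x = dd f x + dd g x := by
  ext i j
  simp only [dd, Matrix.of_apply, Matrix.add_apply]
  exact deriv_add (hf i j) (hg i j)

omit [Fintype n] [Fintype p] in
theorem dd_sub {f g : ℝ → Matrix n p ℂ} {x : ℝ} (hf : DifAt f x) (hg : DifAt g x) :
    dd (fun y => f y - g y) x = dd f x - dd g x := by
  ext i j
  simp only [dd, Matrix.of_apply, Matrix.sub_apply]
  exact deriv_sub (hf i j) (hg i j)

omit [Fintype n] [Fintype p] in
theorem dd_smul {f : ℝ → Matrix n p ℂ} {x : ℝ} (c : ℂ) :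
    dd (fun y => c • f y) x = c • dd f x := by
  ext i j
  simp only [dd, Matrix.of_apply, Matrix.smul_apply, smul_eq_mul]
  exact deriv_const_mul_field c

omit [Fintype n] [Fintype q] in
theorem dd_const_mul {g : ℝ → Matrix p q ℂ} {x : ℝ} (C : Matrix n p ℂ) (hg : DifAt g x) :
    dd (fun y => C * g y) x = C * dd g x := by
  rw [dd_mul difat_const hg, dd_const, Matrix.zero_mul, zero_add]

omit [Fintype n] [Fintype q] in
theorem dd_mul_const {f : ℝ → Matrix n p ℂ} {x : ℝ} (hf : DifAt f x) (C : Matrix p q ℂ) :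
    dd (fun y => f y * C) x = dd f x * C := by
  rw [dd_mul hf difat_const, dd_const, Matrix.mul_zero, add_zero]

section Inv
variable [DecidableEq n]

theorem difat_prod {f : ℝ → Matrix n n ℂ} {x : ℝ} (hf : DifAt f x) (σ : Equiv.Perm n)
    (s : Finset n) : DifferentiableAt ℝ (fun y => ∏ i ∈ s, f y (σ i) i) x := by
  classical
  induction s using Finset.induction with
  | empty => simp
  | insert _ _ hni ih =>
      simp only [Finset.prod_insert hni]
      exact (hf _ _).mul ih

theorem DifAt.det {f : ℝ → Matrix n n ℂ} {x : ℝ} (hf : DifAt f x) :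
    DifferentiableAt ℝ (fun y => (f y).det) x := by
  simp only [Matrix.det_apply, Units.smul_def, zsmul_eq_mul]
  exact DifferentiableAt.fun_sum fun σ _ =>
    DifferentiableAt.const_mul (difat_prod hf σ _) _

theorem DifAt.updateRow {f : ℝ → Matrix n n ℂ} {x : ℝ} (hf : DifAt f x) (j : n) (r : n → ℂ) :
    DifAt (fun y => (f y).updateRow j r) x := by
  intro i k
  by_cases h : i = j
  · subst h; simp only [Matrix.updateRow_self]; exact differentiableAt_const _
  · simp only [Matrix.updateRow_ne h]; exact hf i k

theorem DifAt.inv {f : ℝ → Matrix n n ℂ} {x : ℝ} (hf : DifAt f x)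
    (hu : IsUnit ((f x).det)) : DifAt (fun y => (f y)⁻¹) x := by
  intro i j
  have : (fun y => (f y)⁻¹ i j)
      = fun y => ((f y).det)⁻¹ * ((f y).updateRow j (Pi.single i 1)).det := by
    funext y
    rw [Matrix.inv_def, Matrix.smul_apply, Matrix.adjugate_apply, Ring.inverse_eq_inv',
      smul_eq_mul]
  rw [this]
  exact (hf.det.inv hu.ne_zero).mul (DifAt.det (hf.updateRow j _))

theorem dd_inv {K : ℝ → Matrix n n ℂ} {x : ℝ} (hK : DifAt K x) (hu : ∀ y, IsUnit (K y)) :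
    dd (fun y => (K y)⁻¹) x = -((K x)⁻¹ * dd K x * (K x)⁻¹) := by
  have hdet : ∀ y, IsUnit (K y).det := fun y => (Matrix.isUnit_iff_isUnit_det _).mp (hu y)
  have hinv : DifAt (fun y => (K y)⁻¹) x := hK.inv (hdet x)
  have h2 := dd_mul hK hinv
  rw [show (fun y => K y * (K y)⁻¹) = fun _ => (1 : Matrix n n ℂ) from
      funext fun y => Matrix.mul_nonsing_inv _ (hdet y), dd_const] at h2
  have h3 : K x * dd (fun y => (K y)⁻¹) x = -(dd K x * (K x)⁻¹) := by
    rw [eq_comm, neg_eq_iff_add_eq_zero]; exact h2.symm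
  calc dd (fun y => (K y)⁻¹) x
      = (K x)⁻¹ * (K x * dd (fun y => (K y)⁻¹) x) := by
        rw [← Matrix.mul_assoc, Matrix.nonsing_inv_mul _ (hdet x), Matrix.one_mul]
    _ = -((K x)⁻¹ * dd K x * (K x)⁻¹) := by rw [h3, Matrix.mul_neg, Matrix.mul_assoc]

end Inv
end NLSBD

namespace NLSBD

open Matrix Complex

theorem difat_slice_x {n p : Type*} {F : ℝ → ℝ → Matrix n p ℂ} (hF : SmoothM F) (x t : ℝ) :
    DifAt (fun y => F y t) x := by
  intro i j
  exact (((hF i j).differentiable (by simp)) (x, t)).comp x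
    (((differentiableAt_fun_id : DifferentiableAt ℝ (fun y : ℝ => y) x).prodMk (differentiableAt_const t)))

theorem difat_slice_t {n p : Type*} {F : ℝ → ℝ → Matrix n p ℂ} (hF : SmoothM F) (x t : ℝ) :
    DifAt (fun s => F x s) t := by
  intro i j
  exact (((hF i j).differentiable (by simp)) (x, t)).comp t
    (((differentiableAt_const x).prodMk differentiableAt_fun_id))

theorem difat_fromRows {n₁ n₂ p : Type*} {f : ℝ → Matrix n₁ p ℂ} {g : ℝ → Matrix n₂ p ℂ}
    {x : ℝ} (hf : DifAt f x) (hg : DifAt g x) :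
    DifAt (fun y => Matrix.fromRows (f y) (g y)) x := by
  rintro (i | i) j
  · simpa [Matrix.fromRows_apply_inl] using hf i j
  · simpa [Matrix.fromRows_apply_inr] using hg i j

theorem difat_fromColumns {n p₁ p₂ : Type*} {f : ℝ → Matrix n p₁ ℂ} {g : ℝ → Matrix n p₂ ℂ}
    {x : ℝ} (hf : DifAt f x) (hg : DifAt g x) :
    DifAt (fun y => Matrix.fromCols (f y) (g y)) x := by
  rintro i (j | j)
  · simpa [Matrix.fromCols_apply_inl] using hf i j
  · simpa [Matrix.fromCols_apply_inr] using hg i j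

theorem difat_offdiag {n₁ n₂ : Type*} {f : ℝ → Matrix n₁ n₂ ℂ} {g : ℝ → Matrix n₂ n₁ ℂ}
    {x : ℝ} (hf : DifAt f x) (hg : DifAt g x) :
    DifAt (fun y => Matrix.fromBlocks 0 (f y) (g y) 0) x := by
  rintro (i | i) (j | j) <;> simp only [Matrix.fromBlocks_apply₁₁, Matrix.fromBlocks_apply₁₂,
    Matrix.fromBlocks_apply₂₁, Matrix.fromBlocks_apply₂₂, Matrix.zero_apply]
  · exact differentiableAt_const _
  · exact hf i j
  · exact hg i j
  · exact differentiableAt_const _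

variable {l m : ℕ}

/-- The constant block matrix `diag(I, -I)`. -/
def Sm (l m : ℕ) : Matrix (Fin l ⊕ Fin m) (Fin l ⊕ Fin m) ℂ := Matrix.fromBlocks 1 0 0 (-1)

/-- The off-diagonal part of the Lax matrices. -/
def Am (Q : ℝ → ℝ → Matrix (Fin l) (Fin m) ℂ) (R : ℝ → ℝ → Matrix (Fin m) (Fin l) ℂ) :
    ℝ → ℝ → Matrix (Fin l ⊕ Fin m) (Fin l ⊕ Fin m) ℂ :=
  fun x t => Matrix.fromBlocks 0 (Q x t) (R x t) 0

theorem laxU_repr (η : ℂ) (Q : ℝ → ℝ → Matrix (Fin l) (Fin m) ℂ)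
    (R : ℝ → ℝ → Matrix (Fin m) (Fin l) ℂ) (x t : ℝ) :
    LaxU η Q R x t = (-(Complex.I * η)) • Sm l m + Am Q R x t := by
  simp only [LaxU, Sm, Am, Matrix.fromBlocks_smul, Matrix.fromBlocks_add]
  simp

theorem pdx_Am (Q : ℝ → ℝ → Matrix (Fin l) (Fin m) ℂ)
    (R : ℝ → ℝ → Matrix (Fin m) (Fin l) ℂ) (x t : ℝ) :
    pdx (Am Q R) x t = Matrix.fromBlocks 0 (pdx Q x t) (pdx R x t) 0 := by
  ext (i | i) (j | j) <;> simp [pdx, Am, Matrix.fromBlocks]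

theorem SS_eq : Sm l m * Sm l m = 1 := by
  simp [Sm, Matrix.fromBlocks_multiply, ← Matrix.fromBlocks_one]

theorem S_anticomm (X : Matrix (Fin l) (Fin m) ℂ) (Y : Matrix (Fin m) (Fin l) ℂ) :
    Sm l m * Matrix.fromBlocks 0 X Y 0 = -(Matrix.fromBlocks 0 X Y 0 * Sm l m) := by
  simp [Sm, Matrix.fromBlocks_multiply, Matrix.fromBlocks_neg]

theorem laxV_repr (η : ℂ) (Q : ℝ → ℝ → Matrix (Fin l) (Fin m) ℂ)
    (R : ℝ → ℝ → Matrix (Fin m) (Fin l) ℂ) (x t : ℝ) :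
    LaxV η Q R x t = (-(2 * Complex.I * η ^ 2)) • Sm l m + (2 * η) • Am Q R x t
      + Complex.I • (Sm l m * (pdx (Am Q R) x t - Am Q R x t * Am Q R x t)) := by
  rw [pdx_Am]
  simp only [LaxV, Sm, Am, sub_eq_add_neg, Matrix.fromBlocks_neg, Matrix.fromBlocks_smul,
    Matrix.fromBlocks_multiply, Matrix.fromBlocks_add, Matrix.one_mul,
    Matrix.zero_mul, Matrix.mul_zero, Matrix.mul_one, add_zero, zero_add,
    smul_zero, neg_zero, smul_add, smul_neg, Matrix.neg_mul, Matrix.mul_neg, neg_neg]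
  rw [Matrix.fromBlocks_inj]
  exact ⟨by module, by module, by module, by module⟩

end NLSBD

open NLSBD in
/-- dressing of the eigenfunction under the binary Bäcklund–Darboux
transformation: for `ζ ≠ ν`, if `(χ₁,χ₂)` solves the Lax pair at `ζ` for `(Q,R)`,
then `(1 - ((μ-ν)/(ζ-ν)) P)·[χ₁;χ₂]` solves the Lax pair at `ζ` for `(Q',R')`. -/
theorem binary_BD_dressing {l m p : ℕ} (μ ν : ℂ)
    (Q : ℝ → ℝ → Matrix (Fin l) (Fin m) ℂ) (R : ℝ → ℝ → Matrix (Fin m) (Fin l) ℂ)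
    (hQ : SmoothM Q) (hR : SmoothM R) (hNLS : MatrixNLS Q R)
    (Ψ₁ : ℝ → ℝ → Matrix (Fin l) (Fin l) ℂ) (Ψ₂ : ℝ → ℝ → Matrix (Fin m) (Fin l) ℂ)
    (hΨ₁ : SmoothM Ψ₁) (hΨ₂ : SmoothM Ψ₂)
    (hΨ : IsLaxEigen μ Q R (fun x t => Matrix.fromRows (Ψ₁ x t) (Ψ₂ x t)))
    (Φ₁ : ℝ → ℝ → Matrix (Fin l) (Fin l) ℂ) (Φ₂ : ℝ → ℝ → Matrix (Fin l) (Fin m) ℂ)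
    (hΦ₁ : SmoothM Φ₁) (hΦ₂ : SmoothM Φ₂)
    (hΦ : IsAdjLaxEigen ν Q R (fun x t => Matrix.fromCols (Φ₁ x t) (Φ₂ x t)))
    (K : ℝ → ℝ → Matrix (Fin l) (Fin l) ℂ)
    (hK : ∀ x t : ℝ, K x t = Φ₁ x t * Ψ₁ x t + Φ₂ x t * Ψ₂ x t)
    (hKinv : ∀ x t : ℝ, IsUnit (K x t))
    (P : ℝ → ℝ → Matrix (Fin l ⊕ Fin m) (Fin l ⊕ Fin m) ℂ)
    (hP : ∀ x t : ℝ, P x t = Matrix.fromBlocks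
      (Ψ₁ x t * (K x t)⁻¹ * Φ₁ x t) (Ψ₁ x t * (K x t)⁻¹ * Φ₂ x t)
      (Ψ₂ x t * (K x t)⁻¹ * Φ₁ x t) (Ψ₂ x t * (K x t)⁻¹ * Φ₂ x t))
    (Q' : ℝ → ℝ → Matrix (Fin l) (Fin m) ℂ)
    (hQ' : ∀ x t : ℝ, Q' x t
      = Q x t + (2 * Complex.I * (ν - μ)) • (Ψ₁ x t * (K x t)⁻¹ * Φ₂ x t))
    (R' : ℝ → ℝ → Matrix (Fin m) (Fin l) ℂ)
    (hR' : ∀ x t : ℝ, R' x t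
      = R x t - (2 * Complex.I * (ν - μ)) • (Ψ₂ x t * (K x t)⁻¹ * Φ₁ x t))
    (ζ : ℂ) (hζ : ζ ≠ ν)
    (χ₁ : ℝ → ℝ → Matrix (Fin l) (Fin p) ℂ) (χ₂ : ℝ → ℝ → Matrix (Fin m) (Fin p) ℂ)
    (hχ₁ : SmoothM χ₁) (hχ₂ : SmoothM χ₂)
    (hχ : IsLaxEigen ζ Q R (fun x t => Matrix.fromRows (χ₁ x t) (χ₂ x t))) :
    IsLaxEigen ζ Q' R' (fun x t =>
      (1 - ((μ - ν) / (ζ - ν)) • P x t) * Matrix.fromRows (χ₁ x t) (χ₂ x t)) := by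
  classical
  have hζν : ζ - ν ≠ 0 := sub_ne_zero.mpr hζ
  -- abbreviations
  have hKdet : ∀ x t : ℝ, IsUnit (K x t).det :=
    fun x t => (Matrix.isUnit_iff_isUnit_det _).mp (hKinv x t)
  -- differentiability of slices
  have dΨx : ∀ x t : ℝ, DifAt (fun y => Matrix.fromRows (Ψ₁ y t) (Ψ₂ y t)) x :=
    fun x t => difat_fromRows (difat_slice_x hΨ₁ x t) (difat_slice_x hΨ₂ x t)
  have dΨt : ∀ x t : ℝ, DifAt (fun s => Matrix.fromRows (Ψ₁ x s) (Ψ₂ x s)) t :=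
    fun x t => difat_fromRows (difat_slice_t hΨ₁ x t) (difat_slice_t hΨ₂ x t)
  have dΦx : ∀ x t : ℝ, DifAt (fun y => Matrix.fromCols (Φ₁ y t) (Φ₂ y t)) x :=
    fun x t => difat_fromColumns (difat_slice_x hΦ₁ x t) (difat_slice_x hΦ₂ x t)
  have dΦt : ∀ x t : ℝ, DifAt (fun s => Matrix.fromCols (Φ₁ x s) (Φ₂ x s)) t :=
    fun x t => difat_fromColumns (difat_slice_t hΦ₁ x t) (difat_slice_t hΦ₂ x t)
  have dχx : ∀ x t : ℝ, DifAt (fun y => Matrix.fromRows (χ₁ y t) (χ₂ y t)) x :=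
    fun x t => difat_fromRows (difat_slice_x hχ₁ x t) (difat_slice_x hχ₂ x t)
  have dχt : ∀ x t : ℝ, DifAt (fun s => Matrix.fromRows (χ₁ x s) (χ₂ x s)) t :=
    fun x t => difat_fromRows (difat_slice_t hχ₁ x t) (difat_slice_t hχ₂ x t)
  -- K as a product
  have hKe : ∀ x t : ℝ, K x t
      = Matrix.fromCols (Φ₁ x t) (Φ₂ x t) * Matrix.fromRows (Ψ₁ x t) (Ψ₂ x t) :=
    fun x t => by rw [hK, Matrix.fromCols_mul_fromRows]
  have dKx : ∀ x t : ℝ, DifAt (fun y => K y t) x := fun x t => by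
    have e : (fun y => K y t) = fun y =>
        Matrix.fromCols (Φ₁ y t) (Φ₂ y t) * Matrix.fromRows (Ψ₁ y t) (Ψ₂ y t) :=
      funext fun y => hKe y t
    rw [e]; exact (dΦx x t).mul (dΨx x t)
  have dKt : ∀ x t : ℝ, DifAt (fun s => K x s) t := fun x t => by
    have e : (fun s => K x s) = fun s =>
        Matrix.fromCols (Φ₁ x s) (Φ₂ x s) * Matrix.fromRows (Ψ₁ x s) (Ψ₂ x s) :=
      funext fun s => hKe x s
    rw [e]; exact (dΦt x t).mul (dΨt x t)
  have dKix : ∀ x t : ℝ, DifAt (fun y => (K y t)⁻¹) x := fun x t => (dKx x t).inv (hKdet x t)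
  have dKit : ∀ x t : ℝ, DifAt (fun s => (K x s)⁻¹) t := fun x t => (dKt x t).inv (hKdet x t)
  -- P as a product
  have hPe : ∀ x t : ℝ, P x t = Matrix.fromRows (Ψ₁ x t) (Ψ₂ x t)
      * ((K x t)⁻¹ * Matrix.fromCols (Φ₁ x t) (Φ₂ x t)) := fun x t => by
    rw [hP, Matrix.mul_fromCols, Matrix.fromRows_mul_fromCols]
    simp [Matrix.mul_assoc]
  have dPx : ∀ x t : ℝ, DifAt (fun y => P y t) x := fun x t => by
    have e : (fun y => P y t) = fun y => Matrix.fromRows (Ψ₁ y t) (Ψ₂ y t)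
        * ((K y t)⁻¹ * Matrix.fromCols (Φ₁ y t) (Φ₂ y t)) := funext fun y => hPe y t
    rw [e]; exact (dΨx x t).mul ((dKix x t).mul (dΦx x t))
  have dPt : ∀ x t : ℝ, DifAt (fun s => P x s) t := fun x t => by
    have e : (fun s => P x s) = fun s => Matrix.fromRows (Ψ₁ x s) (Ψ₂ x s)
        * ((K x s)⁻¹ * Matrix.fromCols (Φ₁ x s) (Φ₂ x s)) := funext fun s => hPe x s
    rw [e]; exact (dΨt x t).mul ((dKit x t).mul (dΦt x t))
  -- P is a projector
  have hPP : ∀ x t : ℝ, P x t * P x t = P x t := fun x t => by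
    rw [hPe x t]
    have h1 : Matrix.fromRows (Ψ₁ x t) (Ψ₂ x t) * ((K x t)⁻¹ * Matrix.fromCols (Φ₁ x t) (Φ₂ x t))
        * (Matrix.fromRows (Ψ₁ x t) (Ψ₂ x t) * ((K x t)⁻¹ * Matrix.fromCols (Φ₁ x t) (Φ₂ x t)))
        = Matrix.fromRows (Ψ₁ x t) (Ψ₂ x t) * (((K x t)⁻¹
            * (Matrix.fromCols (Φ₁ x t) (Φ₂ x t) * Matrix.fromRows (Ψ₁ x t) (Ψ₂ x t)))
          * ((K x t)⁻¹ * Matrix.fromCols (Φ₁ x t) (Φ₂ x t))) := by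
      simp only [Matrix.mul_assoc]
    rw [h1, ← hKe x t, Matrix.nonsing_inv_mul _ (hKdet x t), Matrix.one_mul]
  -- eigenfunction equations as dd-statements
  have hΨx : ∀ x t : ℝ, dd (fun y => Matrix.fromRows (Ψ₁ y t) (Ψ₂ y t)) x
      = LaxU μ Q R x t * Matrix.fromRows (Ψ₁ x t) (Ψ₂ x t) := hΨ.1
  have hΨt : ∀ x t : ℝ, dd (fun s => Matrix.fromRows (Ψ₁ x s) (Ψ₂ x s)) t
      = LaxV μ Q R x t * Matrix.fromRows (Ψ₁ x t) (Ψ₂ x t) := hΨ.2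
  have hΦx : ∀ x t : ℝ, dd (fun y => Matrix.fromCols (Φ₁ y t) (Φ₂ y t)) x
      = -(Matrix.fromCols (Φ₁ x t) (Φ₂ x t) * LaxU ν Q R x t) := hΦ.1
  have hΦt : ∀ x t : ℝ, dd (fun s => Matrix.fromCols (Φ₁ x s) (Φ₂ x s)) t
      = -(Matrix.fromCols (Φ₁ x t) (Φ₂ x t) * LaxV ν Q R x t) := hΦ.2
  have hχx : ∀ x t : ℝ, dd (fun y => Matrix.fromRows (χ₁ y t) (χ₂ y t)) x
      = LaxU ζ Q R x t * Matrix.fromRows (χ₁ x t) (χ₂ x t) := hχ.1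
  have hχt : ∀ x t : ℝ, dd (fun s => Matrix.fromRows (χ₁ x s) (χ₂ x s)) t
      = LaxV ζ Q R x t * Matrix.fromRows (χ₁ x t) (χ₂ x t) := hχ.2
  -- derivative of K
  have hKx : ∀ x t : ℝ, dd (fun y => K y t) x = Matrix.fromCols (Φ₁ x t) (Φ₂ x t)
      * ((LaxU μ Q R x t - LaxU ν Q R x t) * Matrix.fromRows (Ψ₁ x t) (Ψ₂ x t)) := fun x t => by
    have e : (fun y => K y t) = fun y =>
        Matrix.fromCols (Φ₁ y t) (Φ₂ y t) * Matrix.fromRows (Ψ₁ y t) (Ψ₂ y t) :=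
      funext fun y => hKe y t
    rw [e, dd_mul (dΦx x t) (dΨx x t), hΦx x t, hΨx x t]
    simp only [Matrix.sub_mul, Matrix.mul_sub, Matrix.neg_mul, Matrix.mul_assoc]
    module
  have hKt : ∀ x t : ℝ, dd (fun s => K x s) t = Matrix.fromCols (Φ₁ x t) (Φ₂ x t)
      * ((LaxV μ Q R x t - LaxV ν Q R x t) * Matrix.fromRows (Ψ₁ x t) (Ψ₂ x t)) := fun x t => by
    have e : (fun s => K x s) = fun s =>
        Matrix.fromCols (Φ₁ x s) (Φ₂ x s) * Matrix.fromRows (Ψ₁ x s) (Ψ₂ x s) :=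
      funext fun s => hKe x s
    rw [e, dd_mul (dΦt x t) (dΨt x t), hΦt x t, hΨt x t]
    simp only [Matrix.sub_mul, Matrix.mul_sub, Matrix.neg_mul, Matrix.mul_assoc]
    module
  have hKix : ∀ x t : ℝ, dd (fun y => (K y t)⁻¹) x
      = -((K x t)⁻¹ * dd (fun y => K y t) x * (K x t)⁻¹) :=
    fun x t => dd_inv (dKx x t) (fun y => hKinv y t)
  have hKit : ∀ x t : ℝ, dd (fun s => (K x s)⁻¹) t
      = -((K x t)⁻¹ * dd (fun s => K x s) t * (K x t)⁻¹) :=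
    fun x t => dd_inv (dKt x t) (fun s => hKinv x s)
  -- spatial derivative of P
  have hPx : ∀ x t : ℝ, pdx P x t = LaxU μ Q R x t * P x t - P x t * LaxU ν Q R x t
      + (Complex.I * (μ - ν)) • (P x t * (Sm l m * P x t)) := fun x t => by
    have h0 : pdx P x t = dd (fun y => P y t) x := rfl
    have e : (fun y => P y t) = fun y => Matrix.fromRows (Ψ₁ y t) (Ψ₂ y t)
        * ((K y t)⁻¹ * Matrix.fromCols (Φ₁ y t) (Φ₂ y t)) := funext fun y => hPe y t
    have hU : LaxU μ Q R x t - LaxU ν Q R x t = (-(Complex.I * (μ - ν))) • Sm l m := by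
      rw [laxU_repr, laxU_repr]; module
    rw [h0, e, dd_mul (dΨx x t) ((dKix x t).mul (dΦx x t)), dd_mul (dKix x t) (dΦx x t),
      hΨx x t, hΦx x t, hKix x t, hKx x t, hU, hPe x t]
    simp only [Matrix.mul_add, Matrix.add_mul, Matrix.mul_sub, Matrix.sub_mul, Matrix.mul_smul,
      Matrix.smul_mul, Matrix.mul_neg, Matrix.neg_mul, Matrix.mul_assoc, smul_add, smul_sub,
      smul_neg, smul_smul, neg_neg]
    module
  -- temporal derivative of P
  have hPt : ∀ x t : ℝ, pdt P x t = LaxV μ Q R x t * P x t - P x t * LaxV ν Q R x t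
      - P x t * ((LaxV μ Q R x t - LaxV ν Q R x t) * P x t) := fun x t => by
    have h0 : pdt P x t = dd (fun s => P x s) t := rfl
    have e : (fun s => P x s) = fun s => Matrix.fromRows (Ψ₁ x s) (Ψ₂ x s)
        * ((K x s)⁻¹ * Matrix.fromCols (Φ₁ x s) (Φ₂ x s)) := funext fun s => hPe x s
    rw [h0, e, dd_mul (dΨt x t) ((dKit x t).mul (dΦt x t)), dd_mul (dKit x t) (dΦt x t),
      hΨt x t, hΦt x t, hKit x t, hKt x t, hPe x t]
    simp only [Matrix.mul_add, Matrix.add_mul, Matrix.mul_sub, Matrix.sub_mul, Matrix.mul_smul,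
      Matrix.smul_mul, Matrix.mul_neg, Matrix.neg_mul, Matrix.mul_assoc, smul_add, smul_sub,
      smul_neg, smul_smul, neg_neg]
    module
  -- the dressed potentials in block form
  have hA'm : ∀ x t : ℝ, Am Q' R' x t
      = Am Q R x t + (Complex.I * (ν - μ)) • (Sm l m * P x t - P x t * Sm l m) := fun x t => by
    show Matrix.fromBlocks 0 (Q' x t) (R' x t) 0 = _
    rw [hQ', hR', hP]
    show _ = Matrix.fromBlocks 0 (Q x t) (R x t) 0 + _
    simp only [Sm, Matrix.fromBlocks_multiply, sub_eq_add_neg, Matrix.fromBlocks_neg,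
      Matrix.fromBlocks_add, Matrix.fromBlocks_smul, Matrix.one_mul, Matrix.mul_one,
      Matrix.zero_mul, Matrix.mul_zero, Matrix.neg_mul, Matrix.mul_neg, add_zero, zero_add,
      neg_zero, neg_neg, smul_add, smul_neg, smul_zero]
    rw [Matrix.fromBlocks_inj]
    exact ⟨by module, by module, by module, by module⟩
  -- spatial derivative of the dressed off-diagonal part
  have dAmx : ∀ x t : ℝ, DifAt (fun y => Am Q R y t) x := fun x t =>
    difat_offdiag (difat_slice_x hQ x t) (difat_slice_x hR x t)
  have hA'x : ∀ x t : ℝ, pdx (Am Q' R') x t = pdx (Am Q R) x t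
      + (Complex.I * (ν - μ)) • (Sm l m * pdx P x t - pdx P x t * Sm l m) := fun x t => by
    have h0 : pdx (Am Q' R') x t = dd (fun y => Am Q' R' y t) x := rfl
    have h1 : pdx (Am Q R) x t = dd (fun y => Am Q R y t) x := rfl
    have h2 : pdx P x t = dd (fun y => P y t) x := rfl
    have e : (fun y => Am Q' R' y t) = fun y => Am Q R y t
        + (Complex.I * (ν - μ)) • (Sm l m * P y t - P y t * Sm l m) := funext fun y => hA'm y t
    have dSP : DifAt (fun y => Sm l m * P y t) x := difat_const.mul (dPx x t)
    have dPS : DifAt (fun y => P y t * Sm l m) x := (dPx x t).mul difat_const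
    rw [h0, h1, h2, e, dd_add (dAmx x t) ((dSP.sub dPS).smul _), dd_smul,
      dd_sub dSP dPS, dd_const_mul _ (dPx x t), dd_mul_const (dPx x t)]
  -- core algebraic identity, spatial part
  have hXid : ∀ x t : ℝ, -((μ - ν) • pdx P x t)
      = LaxU ζ Q' R' x t * ((ζ - ν) • (1 : Matrix (Fin l ⊕ Fin m) (Fin l ⊕ Fin m) ℂ)
          - (μ - ν) • P x t)
        - ((ζ - ν) • (1 : Matrix (Fin l ⊕ Fin m) (Fin l ⊕ Fin m) ℂ) - (μ - ν) • P x t)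
          * LaxU ζ Q R x t := fun x t => by
    have hSA : Sm l m * Am Q R x t = -(Am Q R x t * Sm l m) := S_anticomm _ _
    have hSSw : ∀ W : Matrix (Fin l ⊕ Fin m) (Fin l ⊕ Fin m) ℂ,
        Sm l m * (Sm l m * W) = W := fun W => by
      rw [← Matrix.mul_assoc, SS_eq, Matrix.one_mul]
    have hSAw : ∀ W : Matrix (Fin l ⊕ Fin m) (Fin l ⊕ Fin m) ℂ,
        Sm l m * (Am Q R x t * W) = -(Am Q R x t * (Sm l m * W)) := fun W => by
      rw [← Matrix.mul_assoc, hSA, Matrix.neg_mul, Matrix.mul_assoc]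
    have hPPw : ∀ W : Matrix (Fin l ⊕ Fin m) (Fin l ⊕ Fin m) ℂ,
        P x t * (P x t * W) = P x t * W := fun W => by
      rw [← Matrix.mul_assoc, hPP x t]
    rw [hPx x t, laxU_repr ζ Q' R' x t, hA'm x t, laxU_repr ζ Q R x t, laxU_repr μ Q R x t,
      laxU_repr ν Q R x t]
    simp only [Matrix.mul_add, Matrix.add_mul, Matrix.mul_sub, Matrix.sub_mul,
      Matrix.mul_smul, Matrix.smul_mul, Matrix.mul_one, Matrix.one_mul,
      Matrix.mul_neg, Matrix.neg_mul, Matrix.mul_assoc, smul_add, smul_sub, smul_neg,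
      smul_smul, SS_eq, hSA, hPP x t, hSSw, hSAw, hPPw]
    have h2 : Complex.I ^ 2 = -1 := Complex.I_sq
    have h3 : Complex.I ^ 3 = -Complex.I := by rw [pow_succ, h2]; ring
    have h4 : Complex.I ^ 4 = 1 := by
      rw [pow_succ, h3]; simp [Complex.I_mul_I]
    match_scalars <;> (ring_nf; try (simp only [h2, h3, h4]; try ring1))
  -- core algebraic identity, temporal part
  have hTid : ∀ x t : ℝ, -((μ - ν) • pdt P x t)
      = LaxV ζ Q' R' x t * ((ζ - ν) • (1 : Matrix (Fin l ⊕ Fin m) (Fin l ⊕ Fin m) ℂ)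
          - (μ - ν) • P x t)
        - ((ζ - ν) • (1 : Matrix (Fin l ⊕ Fin m) (Fin l ⊕ Fin m) ℂ) - (μ - ν) • P x t)
          * LaxV ζ Q R x t := fun x t => by
    have hSA : Sm l m * Am Q R x t = -(Am Q R x t * Sm l m) := S_anticomm _ _
    have hSAx : Sm l m * pdx (Am Q R) x t = -(pdx (Am Q R) x t * Sm l m) := by
      rw [pdx_Am]; exact S_anticomm _ _
    have hSSw : ∀ W : Matrix (Fin l ⊕ Fin m) (Fin l ⊕ Fin m) ℂ,
        Sm l m * (Sm l m * W) = W := fun W => by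
      rw [← Matrix.mul_assoc, SS_eq, Matrix.one_mul]
    have hSAw : ∀ W : Matrix (Fin l ⊕ Fin m) (Fin l ⊕ Fin m) ℂ,
        Sm l m * (Am Q R x t * W) = -(Am Q R x t * (Sm l m * W)) := fun W => by
      rw [← Matrix.mul_assoc, hSA, Matrix.neg_mul, Matrix.mul_assoc]
    have hSAxw : ∀ W : Matrix (Fin l ⊕ Fin m) (Fin l ⊕ Fin m) ℂ,
        Sm l m * (pdx (Am Q R) x t * W) = -(pdx (Am Q R) x t * (Sm l m * W)) := fun W => by
      rw [← Matrix.mul_assoc, hSAx, Matrix.neg_mul, Matrix.mul_assoc]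
    have hPPw : ∀ W : Matrix (Fin l ⊕ Fin m) (Fin l ⊕ Fin m) ℂ,
        P x t * (P x t * W) = P x t * W := fun W => by
      rw [← Matrix.mul_assoc, hPP x t]
    rw [hPt x t, laxV_repr ζ Q' R' x t, hA'x x t, hA'm x t, hPx x t, laxU_repr μ Q R x t,
      laxU_repr ν Q R x t, laxV_repr ζ Q R x t, laxV_repr μ Q R x t, laxV_repr ν Q R x t]
    simp only [Matrix.mul_add, Matrix.add_mul, Matrix.mul_sub, Matrix.sub_mul,
      Matrix.mul_smul, Matrix.smul_mul, Matrix.mul_one, Matrix.one_mul,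
      Matrix.mul_neg, Matrix.neg_mul, Matrix.mul_assoc, smul_add, smul_sub, smul_neg,
      smul_smul, neg_neg, SS_eq, hSA, hSAx, hPP x t, hSSw, hSAw, hSAxw, hPPw]
    have h2 : Complex.I ^ 2 = -1 := Complex.I_sq
    have h3 : Complex.I ^ 3 = -Complex.I := by rw [pow_succ, h2]; ring
    have h4 : Complex.I ^ 4 = 1 := by
      rw [pow_succ, h3]; simp [Complex.I_mul_I]
    match_scalars <;> (ring_nf; try (simp only [h2, h3, h4]; try ring1))
  -- rescaling: the Darboux matrix
  have hDscale : ∀ x t : ℝ, (1 : Matrix (Fin l ⊕ Fin m) (Fin l ⊕ Fin m) ℂ)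
      - ((μ - ν) / (ζ - ν)) • P x t
      = (ζ - ν)⁻¹ • ((ζ - ν) • (1 : Matrix (Fin l ⊕ Fin m) (Fin l ⊕ Fin m) ℂ)
          - (μ - ν) • P x t) := fun x t => by
    rw [smul_sub, smul_smul, smul_smul, inv_mul_cancel₀ hζν, one_smul, inv_mul_eq_div]
  -- differentiability of the Darboux factor
  have dDx : ∀ x t : ℝ, DifAt (fun y =>
      (1 : Matrix (Fin l ⊕ Fin m) (Fin l ⊕ Fin m) ℂ) - ((μ - ν) / (ζ - ν)) • P y t) x :=
    fun x t => difat_const.sub ((dPx x t).smul _)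
  have dDt : ∀ x t : ℝ, DifAt (fun s =>
      (1 : Matrix (Fin l ⊕ Fin m) (Fin l ⊕ Fin m) ℂ) - ((μ - ν) / (ζ - ν)) • P x s) t :=
    fun x t => difat_const.sub ((dPt x t).smul _)
  have hdDx : ∀ x t : ℝ, dd (fun y =>
      (1 : Matrix (Fin l ⊕ Fin m) (Fin l ⊕ Fin m) ℂ) - ((μ - ν) / (ζ - ν)) • P y t) x
      = -(((μ - ν) / (ζ - ν)) • pdx P x t) := fun x t => by
    rw [dd_sub difat_const ((dPx x t).smul _), dd_const, dd_smul, zero_sub]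
    rfl
  have hdDt : ∀ x t : ℝ, dd (fun s =>
      (1 : Matrix (Fin l ⊕ Fin m) (Fin l ⊕ Fin m) ℂ) - ((μ - ν) / (ζ - ν)) • P x s) t
      = -(((μ - ν) / (ζ - ν)) • pdt P x t) := fun x t => by
    rw [dd_sub difat_const ((dPt x t).smul _), dd_const, dd_smul, zero_sub]
    rfl
  -- key matrix identities, rescaled
  have keyX : ∀ x t : ℝ, -(((μ - ν) / (ζ - ν)) • pdx P x t)
      + ((1 : Matrix (Fin l ⊕ Fin m) (Fin l ⊕ Fin m) ℂ) - ((μ - ν) / (ζ - ν)) • P x t)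
        * LaxU ζ Q R x t
      = LaxU ζ Q' R' x t * ((1 : Matrix (Fin l ⊕ Fin m) (Fin l ⊕ Fin m) ℂ)
          - ((μ - ν) / (ζ - ν)) • P x t) := fun x t => by
    have hc : ((μ - ν) / (ζ - ν)) • pdx P x t = (ζ - ν)⁻¹ • ((μ - ν) • pdx P x t) := by
      rw [smul_smul, inv_mul_eq_div]
    rw [hDscale x t, hc, Matrix.smul_mul, Matrix.mul_smul, ← smul_neg, ← smul_add]
    congr 1
    rw [hXid x t]
    abel
  have keyT : ∀ x t : ℝ, -(((μ - ν) / (ζ - ν)) • pdt P x t)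
      + ((1 : Matrix (Fin l ⊕ Fin m) (Fin l ⊕ Fin m) ℂ) - ((μ - ν) / (ζ - ν)) • P x t)
        * LaxV ζ Q R x t
      = LaxV ζ Q' R' x t * ((1 : Matrix (Fin l ⊕ Fin m) (Fin l ⊕ Fin m) ℂ)
          - ((μ - ν) / (ζ - ν)) • P x t) := fun x t => by
    have hc : ((μ - ν) / (ζ - ν)) • pdt P x t = (ζ - ν)⁻¹ • ((μ - ν) • pdt P x t) := by
      rw [smul_smul, inv_mul_eq_div]
    rw [hDscale x t, hc, Matrix.smul_mul, Matrix.mul_smul, ← smul_neg, ← smul_add]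
    congr 1
    rw [hTid x t]
    abel
  -- conclusion
  refine ⟨fun x t => ?_, fun x t => ?_⟩
  · calc pdx (fun x t => (1 - ((μ - ν) / (ζ - ν)) • P x t)
          * Matrix.fromRows (χ₁ x t) (χ₂ x t)) x t
        = dd (fun y => ((1 : Matrix (Fin l ⊕ Fin m) (Fin l ⊕ Fin m) ℂ)
            - ((μ - ν) / (ζ - ν)) • P y t) * Matrix.fromRows (χ₁ y t) (χ₂ y t)) x := rfl
      _ = -(((μ - ν) / (ζ - ν)) • pdx P x t) * Matrix.fromRows (χ₁ x t) (χ₂ x t)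
          + ((1 : Matrix (Fin l ⊕ Fin m) (Fin l ⊕ Fin m) ℂ) - ((μ - ν) / (ζ - ν)) • P x t)
            * (LaxU ζ Q R x t * Matrix.fromRows (χ₁ x t) (χ₂ x t)) := by
          rw [dd_mul (dDx x t) (dχx x t), hdDx x t, hχx x t]
      _ = (-(((μ - ν) / (ζ - ν)) • pdx P x t)
          + ((1 : Matrix (Fin l ⊕ Fin m) (Fin l ⊕ Fin m) ℂ) - ((μ - ν) / (ζ - ν)) • P x t)
            * LaxU ζ Q R x t) * Matrix.fromRows (χ₁ x t) (χ₂ x t) := by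
          rw [Matrix.add_mul, Matrix.mul_assoc]
      _ = LaxU ζ Q' R' x t * ((1 - ((μ - ν) / (ζ - ν)) • P x t)
            * Matrix.fromRows (χ₁ x t) (χ₂ x t)) := by
          rw [keyX x t, Matrix.mul_assoc]
  · calc pdt (fun x t => (1 - ((μ - ν) / (ζ - ν)) • P x t)
          * Matrix.fromRows (χ₁ x t) (χ₂ x t)) x t
        = dd (fun s => ((1 : Matrix (Fin l ⊕ Fin m) (Fin l ⊕ Fin m) ℂ)
            - ((μ - ν) / (ζ - ν)) • P x s) * Matrix.fromRows (χ₁ x s) (χ₂ x s)) t := rfl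
      _ = -(((μ - ν) / (ζ - ν)) • pdt P x t) * Matrix.fromRows (χ₁ x t) (χ₂ x t)
          + ((1 : Matrix (Fin l ⊕ Fin m) (Fin l ⊕ Fin m) ℂ) - ((μ - ν) / (ζ - ν)) • P x t)
            * (LaxV ζ Q R x t * Matrix.fromRows (χ₁ x t) (χ₂ x t)) := by
          rw [dd_mul (dDt x t) (dχt x t), hdDt x t, hχt x t]
      _ = (-(((μ - ν) / (ζ - ν)) • pdt P x t)
          + ((1 : Matrix (Fin l ⊕ Fin m) (Fin l ⊕ Fin m) ℂ) - ((μ - ν) / (ζ - ν)) • P x t)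
            * LaxV ζ Q R x t) * Matrix.fromRows (χ₁ x t) (χ₂ x t) := by
          rw [Matrix.add_mul, Matrix.mul_assoc]
      _ = LaxV ζ Q' R' x t * ((1 - ((μ - ν) / (ζ - ν)) • P x t)
            * Matrix.fromRows (χ₁ x t) (χ₂ x t)) := by
          rw [keyT x t, Matrix.mul_assoc]
end
end

section
/- (General plane-wave solution of the matrix NLS system.) Let Γ ∈ M_{m×m}(ℂ), A ∈ M_{l×m}(ℂ), B ∈ M_{m×l}(ℂ) be constant matrices. Then the pair of functions Q(x,t) := exp(−2it·AB) · A · exp(ix·Γ − it·Γ²) and R(x,t) := exp(−ix·Γ + it·Γ²) · B · exp(2it·AB) is a smooth solution of the matrix NLS system: i Q_t + Q_xx − 2 Q R Q = 0 and i R_t − R_xx + 2 R Q R = 0 (here exp denotes the matrix exponential). -/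
open Matrix Complex

noncomputable section

/-- One-parameter plane-wave matrix exponential `exp((c·s)•M)`. -/
def pw {n : ℕ} (M : Matrix (Fin n) (Fin n) ℂ) (c : ℂ) (s : ℝ) : Matrix (Fin n) (Fin n) ℂ :=
  NormedSpace.exp ((c * (s : ℂ)) • M)

lemma entry_hasDerivAt_mul {a b c : Type*} [Fintype b]
    {F : ℝ → Matrix a b ℂ} {F' : Matrix a b ℂ} {G : ℝ → Matrix b c ℂ} {G' : Matrix b c ℂ} {s : ℝ}
    (hF : ∀ i j, HasDerivAt (fun u => F u i j) (F' i j) s)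
    (hG : ∀ i j, HasDerivAt (fun u => G u i j) (G' i j) s) :
    ∀ i j, HasDerivAt (fun u => (F u * G u) i j) ((F' * G s + F s * G') i j) s := by
  intro i j
  have h : HasDerivAt (fun u => ∑ k, F u i k * G u k j)
      (∑ k, (F' i k * G s k j + F s i k * G' k j)) s :=
    HasDerivAt.fun_sum fun k _ => (hF i k).mul (hG k j)
  simp only [Matrix.mul_apply, Matrix.add_apply]
  simpa [Finset.sum_add_distrib] using h

lemma entry_hasDerivAt_const_mul {a b c : Type*} [Fintype b] (C : Matrix a b ℂ)
    {G : ℝ → Matrix b c ℂ} {G' : Matrix b c ℂ} {s : ℝ}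
    (hG : ∀ i j, HasDerivAt (fun u => G u i j) (G' i j) s) :
    ∀ i j, HasDerivAt (fun u => (C * G u) i j) ((C * G') i j) s := by
  intro i j
  have h : HasDerivAt (fun u => ∑ k, C i k * G u k j) (∑ k, C i k * G' k j) s :=
    HasDerivAt.fun_sum fun k _ => (hG k j).const_mul (C i k)
  simpa [Matrix.mul_apply] using h

lemma entry_hasDerivAt_mul_const {a b c : Type*} [Fintype b]
    {F : ℝ → Matrix a b ℂ} {F' : Matrix a b ℂ} {s : ℝ}
    (hF : ∀ i j, HasDerivAt (fun u => F u i j) (F' i j) s) (K : Matrix b c ℂ) :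
    ∀ i j, HasDerivAt (fun u => (F u * K) i j) ((F' * K) i j) s := by
  intro i j
  have h : HasDerivAt (fun u => ∑ k, F u i k * K k j) (∑ k, F' i k * K k j) s :=
    HasDerivAt.fun_sum fun k _ => (hF i k).mul_const (K k j)
  simpa [Matrix.mul_apply] using h

lemma entry_hasDerivAt_smul {a b : Type*} (c : ℂ)
    {F : ℝ → Matrix a b ℂ} {F' : Matrix a b ℂ} {s : ℝ}
    (hF : ∀ i j, HasDerivAt (fun u => F u i j) (F' i j) s) :
    ∀ i j, HasDerivAt (fun u => (c • F u) i j) ((c • F') i j) s := by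
  intro i j
  simpa [Matrix.smul_apply] using (hF i j).const_mul c

lemma pw_hasDerivAt_entry {n : ℕ} (M : Matrix (Fin n) (Fin n) ℂ) (c : ℂ) (s : ℝ) :
    ∀ i j, HasDerivAt (fun u : ℝ => pw M c u i j) ((c • (M * pw M c s)) i j) s := by
  intro i j
  letI : SeminormedRing (Matrix (Fin n) (Fin n) ℂ) := Matrix.linftyOpSemiNormedRing
  letI : NormedRing (Matrix (Fin n) (Fin n) ℂ) := Matrix.linftyOpNormedRing
  letI : NormedAlgebra ℂ (Matrix (Fin n) (Fin n) ℂ) := Matrix.linftyOpNormedAlgebra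
  letI : NormedAlgebra ℝ (Matrix (Fin n) (Fin n) ℂ) := Matrix.linftyOpNormedAlgebra
  haveI : CompleteSpace (Matrix (Fin n) (Fin n) ℂ) := FiniteDimensional.complete ℂ _
  have key : ∀ u : ℝ, u • (c • M) = (c * (u : ℂ)) • M := fun u => by
    rw [← smul_assoc]
    congr 1
    rw [Complex.real_smul, mul_comm]
  have h0 := hasDerivAt_exp_smul_const' (𝕂 := ℝ) (c • M) s
  simp only [key] at h0
  have h2 : c • M * NormedSpace.exp ((c * (s : ℂ)) • M)
      = c • (M * NormedSpace.exp ((c * (s : ℂ)) • M)) := smul_mul_assoc c M _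
  have h1 : HasDerivAt (fun u : ℝ => pw M c u) (c • (M * pw M c s)) s := by
    show HasDerivAt (fun u : ℝ => NormedSpace.exp ((c * (u : ℂ)) • M))
      (c • (M * NormedSpace.exp ((c * (s : ℂ)) • M))) s
    rw [← h2]
    exact h0
  let L : Matrix (Fin n) (Fin n) ℂ →ₗ[ℂ] ℂ :=
    { toFun := fun N => N i j, map_add' := fun _ _ => rfl, map_smul' := fun _ _ => rfl }
  exact ((LinearMap.toContinuousLinearMap L).restrictScalars
    ℝ).hasFDerivAt.comp_hasDerivAt s h1

lemma entry_contDiff_mul {a b c : Type*} [Fintype b]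
    {F : ℝ × ℝ → Matrix a b ℂ} {G : ℝ × ℝ → Matrix b c ℂ}
    (hF : ∀ i j, ContDiff ℝ (⊤ : ℕ∞) fun q => F q i j) (hG : ∀ i j, ContDiff ℝ (⊤ : ℕ∞) fun q => G q i j) :
    ∀ i j, ContDiff ℝ (⊤ : ℕ∞) fun q => (F q * G q) i j := by
  intro i j
  simp only [Matrix.mul_apply]
  exact ContDiff.sum fun k _ => (hF i k).mul (hG k j)

lemma pw_contDiff_entry {n : ℕ} (M : Matrix (Fin n) (Fin n) ℂ) (c : ℂ)
    {g : ℝ × ℝ → ℝ} (hg : ContDiff ℝ (⊤ : ℕ∞) g) :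
    ∀ i j, ContDiff ℝ (⊤ : ℕ∞) fun q : ℝ × ℝ => pw M c (g q) i j := by
  intro i j
  letI : SeminormedRing (Matrix (Fin n) (Fin n) ℂ) := Matrix.linftyOpSemiNormedRing
  letI : NormedRing (Matrix (Fin n) (Fin n) ℂ) := Matrix.linftyOpNormedRing
  letI : NormedAlgebra ℂ (Matrix (Fin n) (Fin n) ℂ) := Matrix.linftyOpNormedAlgebra
  haveI : CompleteSpace (Matrix (Fin n) (Fin n) ℂ) := FiniteDimensional.complete ℂ _
  have key : ∀ u : ℝ, u • (c • M) = (c * (u : ℂ)) • M := fun u => by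
    rw [← smul_assoc]
    congr 1
    rw [Complex.real_smul, mul_comm]
  have hexp : ContDiff ℝ (⊤ : ℕ∞) (NormedSpace.exp : Matrix (Fin n) (Fin n) ℂ → _) :=
    (AnalyticOnNhd.contDiff (fun x _ => NormedSpace.exp_analytic (𝕂 := ℂ) x)).restrict_scalars ℝ
  have h1 : ContDiff ℝ (⊤ : ℕ∞) fun q : ℝ × ℝ => g q • (c • M) := hg.smul contDiff_const
  have h2 := hexp.comp h1
  let L : Matrix (Fin n) (Fin n) ℂ →ₗ[ℂ] ℂ :=
    { toFun := fun N => N i j, map_add' := fun _ _ => rfl, map_smul' := fun _ _ => rfl }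
  have h3 := (((LinearMap.toContinuousLinearMap L).restrictScalars ℝ).contDiff
    (n := ((⊤ : ℕ∞) : WithTop ℕ∞))).comp h2
  have h4 : ContDiff ℝ (⊤ : ℕ∞) fun q : ℝ × ℝ =>
      NormedSpace.exp ((c * ((g q : ℝ) : ℂ)) • M) i j := by
    simp only [← key]
    exact h3
  exact h4

lemma commute_pw {n : ℕ} {X M : Matrix (Fin n) (Fin n) ℂ} (c : ℂ) (s : ℝ) (h : Commute X M) :
    Commute X (pw M c s) := (h.smul_right _).exp_right

lemma pw_mul_pw {n : ℕ} (M : Matrix (Fin n) (Fin n) ℂ) (c d : ℂ) (s : ℝ) (h : c + d = 0) :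
    pw M c s * pw M d s = 1 := by
  rw [pw, pw, ← Matrix.exp_add_of_commute _ _
    (((Commute.refl M).smul_right _).smul_left _)]
  rw [← add_smul, ← add_mul, h, zero_mul, zero_smul, NormedSpace.exp_zero]

lemma pdx_eq {n p : Type*} {Q : ℝ → ℝ → Matrix n p ℂ} {F : ℝ → Matrix n p ℂ}
    {D : Matrix n p ℂ} {x t : ℝ} (hQF : ∀ x', Q x' t = F x')
    (h : ∀ i j, HasDerivAt (fun u => F u i j) (D i j) x) : pdx Q x t = D := by
  ext i j
  show deriv (fun x' => Q x' t i j) x = D i j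
  have e : (fun x' => Q x' t i j) = fun u => F u i j := funext fun u => by rw [hQF u]
  rw [e]
  exact (h i j).deriv

lemma pdt_eq {n p : Type*} {Q : ℝ → ℝ → Matrix n p ℂ} {F : ℝ → Matrix n p ℂ}
    {D : Matrix n p ℂ} {x t : ℝ} (hQF : ∀ t', Q x t' = F t')
    (h : ∀ i j, HasDerivAt (fun u => F u i j) (D i j) t) : pdt Q x t = D := by
  ext i j
  show deriv (fun t' => Q x t' i j) t = D i j
  have e : (fun t' => Q x t' i j) = fun u => F u i j := funext fun u => by rw [hQF u]
  rw [e]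
  exact (h i j).deriv

set_option maxHeartbeats 1000000 in
/-- general plane-wave solution of the matrix NLS system:
`Q = e^{-2it·AB} A e^{ixΓ - itΓ²}`, `R = e^{-ixΓ + itΓ²} B e^{2it·AB}` is a smooth
solution of the matrix NLS system; here `exp` is the matrix exponential. -/
theorem plane_wave_solution {l m : ℕ}
    (Γ : Matrix (Fin m) (Fin m) ℂ) (A : Matrix (Fin l) (Fin m) ℂ)
    (B : Matrix (Fin m) (Fin l) ℂ)
    (Q : ℝ → ℝ → Matrix (Fin l) (Fin m) ℂ)
    (hQ : ∀ x t : ℝ, Q x t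
      = NormedSpace.exp ((-(2 * Complex.I * (t : ℂ))) • (A * B)) * A
          * NormedSpace.exp ((Complex.I * (x : ℂ)) • Γ - (Complex.I * (t : ℂ)) • (Γ * Γ)))
    (R : ℝ → ℝ → Matrix (Fin m) (Fin l) ℂ)
    (hR : ∀ x t : ℝ, R x t
      = NormedSpace.exp ((-(Complex.I * (x : ℂ))) • Γ + (Complex.I * (t : ℂ)) • (Γ * Γ)) * B
          * NormedSpace.exp ((2 * Complex.I * (t : ℂ)) • (A * B))) :
    SmoothM Q ∧ SmoothM R ∧ MatrixNLS Q R := by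
  -- decompositions
  have hQ' : ∀ x t : ℝ, Q x t =
      pw (A * B) (-(2 * Complex.I)) t * (A * (pw Γ Complex.I x * pw (Γ * Γ) (-Complex.I) t)) := by
    intro x t
    rw [hQ x t]
    have e1 : NormedSpace.exp ((-(2 * Complex.I * (t : ℂ))) • (A * B))
        = pw (A * B) (-(2 * Complex.I)) t := by
      simp only [pw]
      congr 2
      ring
    have e2 : NormedSpace.exp ((Complex.I * (x : ℂ)) • Γ - (Complex.I * (t : ℂ)) • (Γ * Γ))
        = pw Γ Complex.I x * pw (Γ * Γ) (-Complex.I) t := by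
      simp only [pw]
      rw [show (Complex.I * (x : ℂ)) • Γ - (Complex.I * (t : ℂ)) • (Γ * Γ)
            = (Complex.I * (x : ℂ)) • Γ + ((-Complex.I) * (t : ℂ)) • (Γ * Γ) by
        rw [sub_eq_add_neg, ← neg_smul, neg_mul]]
      exact Matrix.exp_add_of_commute _ _
        ((((Commute.refl Γ).mul_right (Commute.refl Γ)).smul_left _).smul_right _)
    rw [e1, e2, Matrix.mul_assoc]
  have hR' : ∀ x t : ℝ, R x t =
      pw Γ (-Complex.I) x * (pw (Γ * Γ) Complex.I t * (B * pw (A * B) (2 * Complex.I) t)) := by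
    intro x t
    rw [hR x t]
    have e2 : NormedSpace.exp ((-(Complex.I * (x : ℂ))) • Γ + (Complex.I * (t : ℂ)) • (Γ * Γ))
        = pw Γ (-Complex.I) x * pw (Γ * Γ) Complex.I t := by
      simp only [pw]
      rw [show (-(Complex.I * (x : ℂ))) • Γ = ((-Complex.I) * (x : ℂ)) • Γ by rw [neg_mul]]
      exact Matrix.exp_add_of_commute _ _
        ((((Commute.refl Γ).mul_right (Commute.refl Γ)).smul_left _).smul_right _)
    have e3 : NormedSpace.exp ((2 * Complex.I * (t : ℂ)) • (A * B))
        = pw (A * B) (2 * Complex.I) t := by simp only [pw]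
    rw [e2, e3, Matrix.mul_assoc, Matrix.mul_assoc]
  -- smoothness
  have sQ : SmoothM Q := by
    intro i j
    have e : (fun q : ℝ × ℝ => Q q.1 q.2 i j)
        = fun q : ℝ × ℝ => (pw (A * B) (-(2 * Complex.I)) q.2
            * (A * (pw Γ Complex.I q.1 * pw (Γ * Γ) (-Complex.I) q.2))) i j :=
      funext fun q => by rw [hQ' q.1 q.2]
    rw [e]
    have c1 : ∀ i j, ContDiff ℝ (⊤ : ℕ∞) fun q : ℝ × ℝ => pw (A * B) (-(2 * Complex.I)) q.2 i j :=
      pw_contDiff_entry _ _ contDiff_snd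
    have c2 : ∀ i j, ContDiff ℝ (⊤ : ℕ∞) fun q : ℝ × ℝ => pw Γ Complex.I q.1 i j :=
      pw_contDiff_entry _ _ contDiff_fst
    have c3 : ∀ i j, ContDiff ℝ (⊤ : ℕ∞) fun q : ℝ × ℝ => pw (Γ * Γ) (-Complex.I) q.2 i j :=
      pw_contDiff_entry _ _ contDiff_snd
    have c4 : ∀ (i : Fin l) (j : Fin m), ContDiff ℝ (⊤ : ℕ∞) fun _ : ℝ × ℝ => A i j :=
      fun _ _ => contDiff_const
    exact entry_contDiff_mul c1 (entry_contDiff_mul c4 (entry_contDiff_mul c2 c3)) i j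
  have sR : SmoothM R := by
    intro i j
    have e : (fun q : ℝ × ℝ => R q.1 q.2 i j)
        = fun q : ℝ × ℝ => (pw Γ (-Complex.I) q.1
            * (pw (Γ * Γ) Complex.I q.2 * (B * pw (A * B) (2 * Complex.I) q.2))) i j :=
      funext fun q => by rw [hR' q.1 q.2]
    rw [e]
    have c1 : ∀ i j, ContDiff ℝ (⊤ : ℕ∞) fun q : ℝ × ℝ => pw Γ (-Complex.I) q.1 i j :=
      pw_contDiff_entry _ _ contDiff_fst
    have c2 : ∀ i j, ContDiff ℝ (⊤ : ℕ∞) fun q : ℝ × ℝ => pw (Γ * Γ) Complex.I q.2 i j :=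
      pw_contDiff_entry _ _ contDiff_snd
    have c3 : ∀ i j, ContDiff ℝ (⊤ : ℕ∞) fun q : ℝ × ℝ => pw (A * B) (2 * Complex.I) q.2 i j :=
      pw_contDiff_entry _ _ contDiff_snd
    have c4 : ∀ (i : Fin m) (j : Fin l), ContDiff ℝ (⊤ : ℕ∞) fun _ : ℝ × ℝ => B i j :=
      fun _ _ => contDiff_const
    exact entry_contDiff_mul c1 (entry_contDiff_mul c2 (entry_contDiff_mul c4 c3)) i j
  refine ⟨sQ, sR, ?_, ?_⟩
  · -- first NLS equation
    intro x t
    have d1 : ∀ i j, HasDerivAt (fun u : ℝ => pw (Γ * Γ) (-Complex.I) u i j)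
        (((-Complex.I) • (Γ * Γ * pw (Γ * Γ) (-Complex.I) t)) i j) t :=
      pw_hasDerivAt_entry _ _ t
    have d2 : ∀ i j, HasDerivAt
        (fun u : ℝ => (pw Γ Complex.I x * pw (Γ * Γ) (-Complex.I) u) i j)
        ((pw Γ Complex.I x * ((-Complex.I) • (Γ * Γ * pw (Γ * Γ) (-Complex.I) t))) i j) t :=
      entry_hasDerivAt_const_mul _ d1
    have d3 : ∀ i j, HasDerivAt
        (fun u : ℝ => (A * (pw Γ Complex.I x * pw (Γ * Γ) (-Complex.I) u)) i j)
        ((A * (pw Γ Complex.I x * ((-Complex.I) • (Γ * Γ * pw (Γ * Γ) (-Complex.I) t)))) i j) t :=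
      entry_hasDerivAt_const_mul _ d2
    have d4 : ∀ i j, HasDerivAt (fun u : ℝ => pw (A * B) (-(2 * Complex.I)) u i j)
        (((-(2 * Complex.I)) • (A * B * pw (A * B) (-(2 * Complex.I)) t)) i j) t :=
      pw_hasDerivAt_entry _ _ t
    have d5 : ∀ i j, HasDerivAt
        (fun u : ℝ => (pw (A * B) (-(2 * Complex.I)) u
          * (A * (pw Γ Complex.I x * pw (Γ * Γ) (-Complex.I) u))) i j)
        ((((-(2 * Complex.I)) • (A * B * pw (A * B) (-(2 * Complex.I)) t))
            * (A * (pw Γ Complex.I x * pw (Γ * Γ) (-Complex.I) t))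
          + pw (A * B) (-(2 * Complex.I)) t
            * (A * (pw Γ Complex.I x * ((-Complex.I) • (Γ * Γ * pw (Γ * Γ) (-Complex.I) t))))) i j) t :=
      entry_hasDerivAt_mul d4 d3
    have dQt : pdt Q x t = ((-(2 * Complex.I)) • (A * B * pw (A * B) (-(2 * Complex.I)) t))
          * (A * (pw Γ Complex.I x * pw (Γ * Γ) (-Complex.I) t))
        + pw (A * B) (-(2 * Complex.I)) t
          * (A * (pw Γ Complex.I x * ((-Complex.I) • (Γ * Γ * pw (Γ * Γ) (-Complex.I) t)))) :=
      pdt_eq (fun u => hQ' x u) d5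
    have dQx : ∀ x' : ℝ, pdx Q x' t = pw (A * B) (-(2 * Complex.I)) t
        * (A * ((Complex.I • (Γ * pw Γ Complex.I x')) * pw (Γ * Γ) (-Complex.I) t)) := by
      intro x'
      have e1 : ∀ i j, HasDerivAt (fun u : ℝ => pw Γ Complex.I u i j)
          ((Complex.I • (Γ * pw Γ Complex.I x')) i j) x' := pw_hasDerivAt_entry _ _ x'
      have e2 : ∀ i j, HasDerivAt
          (fun u : ℝ => (pw Γ Complex.I u * pw (Γ * Γ) (-Complex.I) t) i j)
          (((Complex.I • (Γ * pw Γ Complex.I x')) * pw (Γ * Γ) (-Complex.I) t) i j) x' :=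
        entry_hasDerivAt_mul_const e1 _
      have e3 : ∀ i j, HasDerivAt
          (fun u : ℝ => (A * (pw Γ Complex.I u * pw (Γ * Γ) (-Complex.I) t)) i j)
          ((A * ((Complex.I • (Γ * pw Γ Complex.I x')) * pw (Γ * Γ) (-Complex.I) t)) i j) x' :=
        entry_hasDerivAt_const_mul _ e2
      have e4 : ∀ i j, HasDerivAt
          (fun u : ℝ => (pw (A * B) (-(2 * Complex.I)) t
            * (A * (pw Γ Complex.I u * pw (Γ * Γ) (-Complex.I) t))) i j)
          ((pw (A * B) (-(2 * Complex.I)) t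
            * (A * ((Complex.I • (Γ * pw Γ Complex.I x')) * pw (Γ * Γ) (-Complex.I) t))) i j) x' :=
        entry_hasDerivAt_const_mul _ e3
      exact pdx_eq (fun u => hQ' u t) e4
    have dQxx : pdx (pdx Q) x t = pw (A * B) (-(2 * Complex.I)) t
        * (A * ((Complex.I • (Γ * (Complex.I • (Γ * pw Γ Complex.I x))))
            * pw (Γ * Γ) (-Complex.I) t)) := by
      have e1 : ∀ i j, HasDerivAt (fun u : ℝ => pw Γ Complex.I u i j)
          ((Complex.I • (Γ * pw Γ Complex.I x)) i j) x := pw_hasDerivAt_entry _ _ x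
      have e2 : ∀ i j, HasDerivAt (fun u : ℝ => (Γ * pw Γ Complex.I u) i j)
          ((Γ * (Complex.I • (Γ * pw Γ Complex.I x))) i j) x :=
        entry_hasDerivAt_const_mul _ e1
      have e3 : ∀ i j, HasDerivAt (fun u : ℝ => (Complex.I • (Γ * pw Γ Complex.I u)) i j)
          ((Complex.I • (Γ * (Complex.I • (Γ * pw Γ Complex.I x)))) i j) x :=
        entry_hasDerivAt_smul _ e2
      have e4 : ∀ i j, HasDerivAt
          (fun u : ℝ => ((Complex.I • (Γ * pw Γ Complex.I u)) * pw (Γ * Γ) (-Complex.I) t) i j)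
          (((Complex.I • (Γ * (Complex.I • (Γ * pw Γ Complex.I x))))
            * pw (Γ * Γ) (-Complex.I) t) i j) x :=
        entry_hasDerivAt_mul_const e3 _
      have e5 : ∀ i j, HasDerivAt
          (fun u : ℝ => (A * ((Complex.I • (Γ * pw Γ Complex.I u)) * pw (Γ * Γ) (-Complex.I) t)) i j)
          ((A * ((Complex.I • (Γ * (Complex.I • (Γ * pw Γ Complex.I x))))
            * pw (Γ * Γ) (-Complex.I) t)) i j) x :=
        entry_hasDerivAt_const_mul _ e4
      have e6 : ∀ i j, HasDerivAt
          (fun u : ℝ => (pw (A * B) (-(2 * Complex.I)) t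
            * (A * ((Complex.I • (Γ * pw Γ Complex.I u)) * pw (Γ * Γ) (-Complex.I) t))) i j)
          ((pw (A * B) (-(2 * Complex.I)) t
            * (A * ((Complex.I • (Γ * (Complex.I • (Γ * pw Γ Complex.I x))))
              * pw (Γ * Γ) (-Complex.I) t))) i j) x :=
        entry_hasDerivAt_const_mul _ e5
      exact pdx_eq (fun u => dQx u) e6
    have canc1 : ∀ (Y : Matrix (Fin l) (Fin m) ℂ),
        pw (A * B) (2 * Complex.I) t * (pw (A * B) (-(2 * Complex.I)) t * Y) = Y := fun Y => by
      rw [← Matrix.mul_assoc, pw_mul_pw _ _ _ _ (by ring), Matrix.one_mul]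
    have cgh : Commute (pw (Γ * Γ) (-Complex.I) t) (pw Γ (-Complex.I) x) :=
      (commute_pw (-Complex.I) t
        (commute_pw (-Complex.I) x
          ((Commute.refl Γ).mul_right (Commute.refl Γ)).symm).symm).symm
    have swap1 : ∀ (Y : Matrix (Fin m) (Fin m) ℂ),
        pw (Γ * Γ) (-Complex.I) t * (pw Γ (-Complex.I) x * Y)
          = pw Γ (-Complex.I) x * (pw (Γ * Γ) (-Complex.I) t * Y) := fun Y => by
      rw [← Matrix.mul_assoc, cgh.eq, Matrix.mul_assoc]
    have canc2 : ∀ (Y : Matrix (Fin m) (Fin m) ℂ),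
        pw Γ Complex.I x * (pw Γ (-Complex.I) x * Y) = Y := fun Y => by
      rw [← Matrix.mul_assoc, pw_mul_pw _ _ _ _ (by ring), Matrix.one_mul]
    have canc3 : ∀ (Y : Matrix (Fin m) (Fin m) ℂ),
        pw (Γ * Γ) (-Complex.I) t * (pw (Γ * Γ) Complex.I t * Y) = Y := fun Y => by
      rw [← Matrix.mul_assoc, pw_mul_pw _ _ _ _ (by ring), Matrix.one_mul]
    have fQRQ : Q x t * R x t * Q x t = pw (A * B) (-(2 * Complex.I)) t
        * (A * (B * (A * (pw Γ Complex.I x * pw (Γ * Γ) (-Complex.I) t)))) := by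
      rw [hQ' x t, hR' x t]
      simp only [Matrix.mul_assoc]
      rw [canc1, swap1, canc2, canc3]
    rw [dQt, dQxx, fQRQ]
    have swapAB : ∀ (Y : Matrix (Fin l) (Fin m) ℂ),
        A * (B * (pw (A * B) (-(2 * Complex.I)) t * Y))
          = pw (A * B) (-(2 * Complex.I)) t * (A * (B * Y)) := fun Y => by
      rw [← Matrix.mul_assoc, ← Matrix.mul_assoc,
        (commute_pw (-(2 * Complex.I)) t (Commute.refl (A * B))).eq,
        Matrix.mul_assoc, Matrix.mul_assoc]
    have swapG : ∀ (Y : Matrix (Fin m) (Fin m) ℂ),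
        Γ * (pw Γ Complex.I x * Y) = pw Γ Complex.I x * (Γ * Y) := fun Y => by
      rw [← Matrix.mul_assoc, (commute_pw Complex.I x (Commute.refl Γ)).eq, Matrix.mul_assoc]
    simp only [Matrix.mul_add, Matrix.add_mul, Matrix.smul_mul, Matrix.mul_smul, smul_smul, smul_add, Matrix.mul_assoc]
    rw [swapAB]
    simp only [swapG]
    match_scalars <;> (try ring) <;> linear_combination (-2 : ℂ) * Complex.I_mul_I
  · -- second NLS equation
    intro x t
    have d1 : ∀ i j, HasDerivAt (fun u : ℝ => pw (A * B) (2 * Complex.I) u i j)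
        (((2 * Complex.I) • (A * B * pw (A * B) (2 * Complex.I) t)) i j) t :=
      pw_hasDerivAt_entry _ _ t
    have d2 : ∀ i j, HasDerivAt (fun u : ℝ => (B * pw (A * B) (2 * Complex.I) u) i j)
        ((B * ((2 * Complex.I) • (A * B * pw (A * B) (2 * Complex.I) t))) i j) t :=
      entry_hasDerivAt_const_mul _ d1
    have d3 : ∀ i j, HasDerivAt (fun u : ℝ => pw (Γ * Γ) Complex.I u i j)
        ((Complex.I • (Γ * Γ * pw (Γ * Γ) Complex.I t)) i j) t :=
      pw_hasDerivAt_entry _ _ t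
    have d4 : ∀ i j, HasDerivAt
        (fun u : ℝ => (pw (Γ * Γ) Complex.I u * (B * pw (A * B) (2 * Complex.I) u)) i j)
        (((Complex.I • (Γ * Γ * pw (Γ * Γ) Complex.I t)) * (B * pw (A * B) (2 * Complex.I) t)
          + pw (Γ * Γ) Complex.I t
            * (B * ((2 * Complex.I) • (A * B * pw (A * B) (2 * Complex.I) t)))) i j) t :=
      entry_hasDerivAt_mul d3 d2
    have d5 : ∀ i j, HasDerivAt
        (fun u : ℝ => (pw Γ (-Complex.I) x
          * (pw (Γ * Γ) Complex.I u * (B * pw (A * B) (2 * Complex.I) u))) i j)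
        ((pw Γ (-Complex.I) x
          * ((Complex.I • (Γ * Γ * pw (Γ * Γ) Complex.I t)) * (B * pw (A * B) (2 * Complex.I) t)
            + pw (Γ * Γ) Complex.I t
              * (B * ((2 * Complex.I) • (A * B * pw (A * B) (2 * Complex.I) t))))) i j) t :=
      entry_hasDerivAt_const_mul _ d4
    have dRt : pdt R x t = pw Γ (-Complex.I) x
        * ((Complex.I • (Γ * Γ * pw (Γ * Γ) Complex.I t)) * (B * pw (A * B) (2 * Complex.I) t)
          + pw (Γ * Γ) Complex.I t
            * (B * ((2 * Complex.I) • (A * B * pw (A * B) (2 * Complex.I) t)))) :=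
      pdt_eq (fun u => hR' x u) d5
    have dRx : ∀ x' : ℝ, pdx R x' t = ((-Complex.I) • (Γ * pw Γ (-Complex.I) x'))
        * (pw (Γ * Γ) Complex.I t * (B * pw (A * B) (2 * Complex.I) t)) := by
      intro x'
      have e1 : ∀ i j, HasDerivAt (fun u : ℝ => pw Γ (-Complex.I) u i j)
          (((-Complex.I) • (Γ * pw Γ (-Complex.I) x')) i j) x' := pw_hasDerivAt_entry _ _ x'
      have e2 : ∀ i j, HasDerivAt
          (fun u : ℝ => (pw Γ (-Complex.I) u
            * (pw (Γ * Γ) Complex.I t * (B * pw (A * B) (2 * Complex.I) t))) i j)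
          ((((-Complex.I) • (Γ * pw Γ (-Complex.I) x'))
            * (pw (Γ * Γ) Complex.I t * (B * pw (A * B) (2 * Complex.I) t))) i j) x' :=
        entry_hasDerivAt_mul_const e1 _
      exact pdx_eq (fun u => hR' u t) e2
    have dRxx : pdx (pdx R) x t = ((-Complex.I) • (Γ * ((-Complex.I) • (Γ * pw Γ (-Complex.I) x))))
        * (pw (Γ * Γ) Complex.I t * (B * pw (A * B) (2 * Complex.I) t)) := by
      have e1 : ∀ i j, HasDerivAt (fun u : ℝ => pw Γ (-Complex.I) u i j)
          (((-Complex.I) • (Γ * pw Γ (-Complex.I) x)) i j) x := pw_hasDerivAt_entry _ _ x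
      have e2 : ∀ i j, HasDerivAt (fun u : ℝ => (Γ * pw Γ (-Complex.I) u) i j)
          ((Γ * ((-Complex.I) • (Γ * pw Γ (-Complex.I) x))) i j) x :=
        entry_hasDerivAt_const_mul _ e1
      have e3 : ∀ i j, HasDerivAt (fun u : ℝ => ((-Complex.I) • (Γ * pw Γ (-Complex.I) u)) i j)
          (((-Complex.I) • (Γ * ((-Complex.I) • (Γ * pw Γ (-Complex.I) x)))) i j) x :=
        entry_hasDerivAt_smul _ e2
      have e4 : ∀ i j, HasDerivAt
          (fun u : ℝ => (((-Complex.I) • (Γ * pw Γ (-Complex.I) u))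
            * (pw (Γ * Γ) Complex.I t * (B * pw (A * B) (2 * Complex.I) t))) i j)
          ((((-Complex.I) • (Γ * ((-Complex.I) • (Γ * pw Γ (-Complex.I) x))))
            * (pw (Γ * Γ) Complex.I t * (B * pw (A * B) (2 * Complex.I) t))) i j) x :=
        entry_hasDerivAt_mul_const e3 _
      exact pdx_eq (fun u => dRx u) e4
    have canc1 : ∀ (Y : Matrix (Fin l) (Fin l) ℂ),
        pw (A * B) (2 * Complex.I) t * (pw (A * B) (-(2 * Complex.I)) t * Y) = Y := fun Y => by
      rw [← Matrix.mul_assoc, pw_mul_pw _ _ _ _ (by ring), Matrix.one_mul]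
    have cgh : Commute (pw (Γ * Γ) (-Complex.I) t) (pw Γ (-Complex.I) x) :=
      (commute_pw (-Complex.I) t
        (commute_pw (-Complex.I) x
          ((Commute.refl Γ).mul_right (Commute.refl Γ)).symm).symm).symm
    have swap1 : ∀ (Y : Matrix (Fin m) (Fin l) ℂ),
        pw (Γ * Γ) (-Complex.I) t * (pw Γ (-Complex.I) x * Y)
          = pw Γ (-Complex.I) x * (pw (Γ * Γ) (-Complex.I) t * Y) := fun Y => by
      rw [← Matrix.mul_assoc, cgh.eq, Matrix.mul_assoc]
    have canc2 : ∀ (Y : Matrix (Fin m) (Fin l) ℂ),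
        pw Γ Complex.I x * (pw Γ (-Complex.I) x * Y) = Y := fun Y => by
      rw [← Matrix.mul_assoc, pw_mul_pw _ _ _ _ (by ring), Matrix.one_mul]
    have canc3 : ∀ (Y : Matrix (Fin m) (Fin l) ℂ),
        pw (Γ * Γ) (-Complex.I) t * (pw (Γ * Γ) Complex.I t * Y) = Y := fun Y => by
      rw [← Matrix.mul_assoc, pw_mul_pw _ _ _ _ (by ring), Matrix.one_mul]
    have fRQR : R x t * Q x t * R x t = pw Γ (-Complex.I) x
        * (pw (Γ * Γ) Complex.I t * (B * (A * (B * pw (A * B) (2 * Complex.I) t)))) := by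
      rw [hR' x t, hQ' x t]
      simp only [Matrix.mul_assoc]
      rw [canc1, swap1, canc2, canc3]
    rw [dRt, dRxx, fRQR]
    have swapG : ∀ (Y : Matrix (Fin m) (Fin l) ℂ),
        Γ * (pw Γ (-Complex.I) x * Y) = pw Γ (-Complex.I) x * (Γ * Y) := fun Y => by
      rw [← Matrix.mul_assoc, (commute_pw (-Complex.I) x (Commute.refl Γ)).eq, Matrix.mul_assoc]
    simp only [Matrix.mul_add, Matrix.add_mul, Matrix.smul_mul, Matrix.mul_smul, smul_smul, smul_add, Matrix.mul_assoc]
    simp only [swapG]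
    match_scalars <;> (try ring) <;> linear_combination (2 : ℂ) * Complex.I_mul_I
end
end

section
/- (Vector dark soliton.) Let m ≥ 1, let σ_1,…,σ_m ∈ {+1,−1}, a_1,…,a_m ∈ ℂ with Σ_{j=1}^m σ_j |a_j|² = 1, and let γ_1,…,γ_m, ξ, η, δ ∈ ℝ. For j = 1,…,m define ω_j := γ_j² + 2 Σ_{k=1}^m σ_k |a_k|² [ (ξ−γ_k)² + η² ] and q_j(x,t) := a_j · exp( i γ_j x − i ω_j t ) · ( i(ξ−γ_j) + η · tanh( η (x − 2ξ t) + δ ) ). Then (q_1,…,q_m) is a smooth solution of the vector NLS equation: for every j, i ∂_t q_j + ∂_x² q_j − 2 ( Σ_{k=1}^m σ_k |q_k|² ) q_j = 0. -/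
open Complex

noncomputable section

/-- Partial derivative of a scalar complex field in the first (space) variable. -/
def pdx1 (q : ℝ → ℝ → ℂ) : ℝ → ℝ → ℂ := fun x t => deriv (fun x' => q x' t) x

/-- Partial derivative of a scalar complex field in the second (time) variable. -/
def pdt1 (q : ℝ → ℝ → ℂ) : ℝ → ℝ → ℂ := fun x t => deriv (fun t' => q x t' ) t

lemma tanh_hasDerivAt (x : ℝ) : HasDerivAt Real.tanh (1 - Real.tanh x ^ 2) x := by
  have htanh : Real.tanh = fun y => Real.sinh y / Real.cosh y :=
    funext fun y => Real.tanh_eq_sinh_div_cosh y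
  have h := (Real.hasDerivAt_sinh x).div (Real.hasDerivAt_cosh x) (Real.cosh_pos x).ne'
  rw [htanh]
  convert h using 1 <;> try with_reducible_and_instances rfl
  have hc := (Real.cosh_pos x).ne'
  have hs := Real.cosh_sq_sub_sinh_sq x
  field_simp

lemma contDiff_tanh : ContDiff ℝ (⊤ : ℕ∞) Real.tanh := by
  have htanh : Real.tanh = fun y => Real.sinh y / Real.cosh y :=
    funext fun y => Real.tanh_eq_sinh_div_cosh y
  rw [htanh]
  exact Real.contDiff_sinh.div Real.contDiff_cosh fun y => (Real.cosh_pos y).ne'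

lemma L3 {ef : ℝ → ℂ} {e' : ℂ} {θf : ℝ → ℝ} {θ' x : ℝ}
    (he : HasDerivAt ef e' x) (hθ : HasDerivAt θf θ' x) (b0 b1 b2 b3 : ℂ) :
    HasDerivAt (fun y => ef y * (b0 + b1 * ((Real.tanh (θf y) : ℝ) : ℂ)
        + b2 * ((Real.tanh (θf y) : ℝ) : ℂ) ^ 2 + b3 * ((Real.tanh (θf y) : ℝ) : ℂ) ^ 3))
      (e' * (b0 + b1 * ((Real.tanh (θf x) : ℝ) : ℂ)
          + b2 * ((Real.tanh (θf x) : ℝ) : ℂ) ^ 2 + b3 * ((Real.tanh (θf x) : ℝ) : ℂ) ^ 3)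
        + ef x * ((b1 + 2 * b2 * ((Real.tanh (θf x) : ℝ) : ℂ)
            + 3 * b3 * ((Real.tanh (θf x) : ℝ) : ℂ) ^ 2) * (θ' : ℂ)
          * (1 - ((Real.tanh (θf x) : ℝ) : ℂ) ^ 2))) x := by
  have hT := ((tanh_hasDerivAt (θf x)).comp x hθ).ofReal_comp
  have h2 := hT.mul hT
  have h3 := h2.mul hT
  have hp := (((hT.const_mul b1).const_add b0).add (h2.const_mul b2)).add (h3.const_mul b3)
  have h := he.mul hp
  simp only [Function.comp_apply] at h
  convert h using 1 <;> try with_reducible_and_instances rfl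
  · funext y; simp only [Pi.mul_apply, Pi.add_apply, Pi.pow_apply]; ring
  · simp only [Pi.mul_apply, Pi.add_apply, Pi.pow_apply]; push_cast [-Complex.ofReal_tanh]; ring

/-- vector dark soliton: with `Σ_j σ_j |a_j|² = 1`,
`ω_j = γ_j² + 2 Σ_k σ_k |a_k|² [(ξ-γ_k)² + η²]` and
`q_j(x,t) = a_j e^{iγ_j x - iω_j t} (i(ξ-γ_j) + η tanh(η(x-2ξt)+δ))`,
the tuple `(q_1,…,q_m)` is a smooth solution of the vector NLS equation
`i ∂_t q_j + ∂_x² q_j - 2 (Σ_k σ_k |q_k|²) q_j = 0`. -/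
theorem vector_dark_soliton {m : ℕ} (hm : 1 ≤ m)
    (σ : Fin m → ℝ) (hσ : ∀ j, σ j = 1 ∨ σ j = -1)
    (a : Fin m → ℂ) (ha : ∑ j, σ j * Complex.normSq (a j) = 1)
    (γ : Fin m → ℝ) (ξ η δ : ℝ)
    (ω : Fin m → ℝ)
    (hω : ∀ j, ω j = γ j ^ 2
      + 2 * ∑ k, σ k * Complex.normSq (a k) * ((ξ - γ k) ^ 2 + η ^ 2))
    (q : Fin m → ℝ → ℝ → ℂ)
    (hq : ∀ j, ∀ x t : ℝ, q j x t
      = a j * Complex.exp (Complex.I * (γ j : ℂ) * (x : ℂ) - Complex.I * (ω j : ℂ) * (t : ℂ))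
        * (Complex.I * ((ξ - γ j : ℝ) : ℂ)
            + (η : ℂ) * ((Real.tanh (η * (x - 2 * ξ * t) + δ) : ℝ) : ℂ))) :
    (∀ j, ContDiff ℝ (⊤ : ℕ∞) (fun p : ℝ × ℝ => q j p.1 p.2)) ∧
    ∀ j, ∀ x t : ℝ, Complex.I * pdt1 (q j) x t + pdx1 (pdx1 (q j)) x t
        - 2 * (∑ k, (σ k : ℂ) * (q k x t * (starRingEnd ℂ) (q k x t))) * q j x t = 0 := by
  constructor
  · -- smoothness
    intro j
    have hfe : (fun p : ℝ × ℝ => q j p.1 p.2) = fun p : ℝ × ℝ =>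
        a j * Complex.exp (Complex.I * (γ j : ℂ) * (p.1 : ℂ) - Complex.I * (ω j : ℂ) * (p.2 : ℂ))
          * (Complex.I * ((ξ - γ j : ℝ) : ℂ)
              + (η : ℂ) * ((Real.tanh (η * (p.1 - 2 * ξ * p.2) + δ) : ℝ) : ℂ)) :=
      funext fun p => hq j p.1 p.2
    rw [hfe]
    have hofReal : ContDiff ℝ (⊤ : ℕ∞) (fun r : ℝ => (r : ℂ)) := Complex.ofRealCLM.contDiff
    have h1 : ContDiff ℝ (⊤ : ℕ∞) (fun p : ℝ × ℝ =>
        Complex.I * (γ j : ℂ) * (p.1 : ℂ) - Complex.I * (ω j : ℂ) * (p.2 : ℂ)) :=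
      (contDiff_const.mul (hofReal.comp contDiff_fst)).sub
        (contDiff_const.mul (hofReal.comp contDiff_snd))
    have h2 : ContDiff ℝ (⊤ : ℕ∞) (fun p : ℝ × ℝ => η * (p.1 - 2 * ξ * p.2) + δ) :=
      (contDiff_const.mul (contDiff_fst.sub (contDiff_const.mul contDiff_snd))).add contDiff_const
    have hexpC : ContDiff ℝ (⊤ : ℕ∞) Complex.exp := Complex.contDiff_exp
    exact (contDiff_const.mul (hexpC.comp h1)).mul
      (contDiff_const.add (contDiff_const.mul (hofReal.comp (contDiff_tanh.comp h2))))
  · intro j x t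
    set SA : ℝ := ∑ k, σ k * Complex.normSq (a k) * (ξ - γ k) ^ 2 with hSA
    have hcoord : ∀ y : ℝ, HasDerivAt (fun s : ℝ => (s : ℂ)) 1 y := fun y => by
      simpa using (hasDerivAt_id y).ofReal_comp
    -- exp factor, x-direction
    have hex : ∀ x' : ℝ, HasDerivAt
        (fun y : ℝ => a j * Complex.exp (Complex.I * (γ j : ℂ) * (y : ℂ) - Complex.I * (ω j : ℂ) * (t : ℂ)))
        (a j * (Complex.I * (γ j : ℂ))
          * Complex.exp (Complex.I * (γ j : ℂ) * (x' : ℂ) - Complex.I * (ω j : ℂ) * (t : ℂ))) x' := by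
      intro x'
      have h := ((((hcoord x').const_mul (Complex.I * (γ j : ℂ))).sub_const
        (Complex.I * (ω j : ℂ) * (t : ℂ))).cexp).const_mul (a j)
      convert h using 1 <;> try with_reducible_and_instances rfl
      ring
    have hθx : ∀ x' : ℝ, HasDerivAt (fun y : ℝ => η * (y - 2 * ξ * t) + δ) η x' := fun x' => by
      simpa using (((hasDerivAt_id x').sub_const (2 * ξ * t)).const_mul η).add_const δ
    -- first x-derivative
    have hx1 : ∀ x' : ℝ, HasDerivAt (fun y : ℝ => q j y t)
        (a j * Complex.exp (Complex.I * (γ j : ℂ) * (x' : ℂ) - Complex.I * (ω j : ℂ) * (t : ℂ))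
          * ((Complex.I * (γ j : ℂ)) * (Complex.I * ((ξ : ℂ) - (γ j : ℂ))
              + (η : ℂ) * ((Real.tanh (η * (x' - 2 * ξ * t) + δ) : ℝ) : ℂ))
            + (η : ℂ) ^ 2 * (1 - ((Real.tanh (η * (x' - 2 * ξ * t) + δ) : ℝ) : ℂ) ^ 2))) x' := by
      intro x'
      have h := L3 (hex x') (hθx x') (Complex.I * ((ξ : ℂ) - (γ j : ℂ))) (η : ℂ) 0 0
      refine HasDerivAt.congr_of_eventuallyEq (f := fun y : ℝ =>
        a j * Complex.exp (Complex.I * (γ j : ℂ) * (y : ℂ) - Complex.I * (ω j : ℂ) * (t : ℂ))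
          * (Complex.I * ((ξ : ℂ) - (γ j : ℂ)) + (η : ℂ) * ((Real.tanh (η * (y - 2 * ξ * t) + δ) : ℝ) : ℂ)
            + 0 * ((Real.tanh (η * (y - 2 * ξ * t) + δ) : ℝ) : ℂ) ^ 2 + 0 * ((Real.tanh (η * (y - 2 * ξ * t) + δ) : ℝ) : ℂ) ^ 3)) ?_
        (Filter.Eventually.of_forall fun y => ?_)
      · convert h using 1 <;> try with_reducible_and_instances rfl
        push_cast [-Complex.ofReal_tanh]
        ring
      · beta_reduce; rw [hq j y t]; push_cast [-Complex.ofReal_tanh]; ring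
    -- second x-derivative
    have hx2 : HasDerivAt (fun x' : ℝ => deriv (fun y : ℝ => q j y t) x')
        (a j * Complex.exp (Complex.I * (γ j : ℂ) * (x : ℂ) - Complex.I * (ω j : ℂ) * (t : ℂ))
          * ((Complex.I * (γ j : ℂ)) * ((Complex.I * (γ j : ℂ)) * (Complex.I * ((ξ : ℂ) - (γ j : ℂ))
                + (η : ℂ) * ((Real.tanh (η * (x - 2 * ξ * t) + δ) : ℝ) : ℂ))
              + (η : ℂ) ^ 2 * (1 - ((Real.tanh (η * (x - 2 * ξ * t) + δ) : ℝ) : ℂ) ^ 2))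
            + (Complex.I * (γ j : ℂ)) * (η : ℂ) ^ 2
              * (1 - ((Real.tanh (η * (x - 2 * ξ * t) + δ) : ℝ) : ℂ) ^ 2)
            - 2 * (η : ℂ) ^ 3 * ((Real.tanh (η * (x - 2 * ξ * t) + δ) : ℝ) : ℂ)
              * (1 - ((Real.tanh (η * (x - 2 * ξ * t) + δ) : ℝ) : ℂ) ^ 2))) x := by
      have h := L3 (hex x) (hθx x)
        (Complex.I * (γ j : ℂ) * (Complex.I * ((ξ : ℂ) - (γ j : ℂ))) + (η : ℂ) ^ 2)
        (Complex.I * (γ j : ℂ) * (η : ℂ)) (-(η : ℂ) ^ 2) 0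
      refine HasDerivAt.congr_of_eventuallyEq (f := fun y : ℝ =>
        a j * Complex.exp (Complex.I * (γ j : ℂ) * (y : ℂ) - Complex.I * (ω j : ℂ) * (t : ℂ))
          * ((Complex.I * (γ j : ℂ) * (Complex.I * ((ξ : ℂ) - (γ j : ℂ))) + (η : ℂ) ^ 2)
            + (Complex.I * (γ j : ℂ) * (η : ℂ)) * ((Real.tanh (η * (y - 2 * ξ * t) + δ) : ℝ) : ℂ)
            + (-(η : ℂ) ^ 2) * ((Real.tanh (η * (y - 2 * ξ * t) + δ) : ℝ) : ℂ) ^ 2 + 0 * ((Real.tanh (η * (y - 2 * ξ * t) + δ) : ℝ) : ℂ) ^ 3)) ?_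
        (Filter.Eventually.of_forall fun y => ?_)
      · convert h using 1 <;> try with_reducible_and_instances rfl
        push_cast [-Complex.ofReal_tanh]
        ring
      · beta_reduce; rw [(hx1 y).deriv]; push_cast [-Complex.ofReal_tanh]; ring
    -- t-derivative
    have hθt : HasDerivAt (fun s : ℝ => η * (x - 2 * ξ * s) + δ) (-(2 * ξ * η)) t := by
      have h := ((((hasDerivAt_id t).const_mul (2 * ξ)).const_sub x).const_mul η).add_const δ
      convert h using 1 <;> try with_reducible_and_instances rfl
      · simp only [id]
      ring
    have het : HasDerivAt
        (fun s : ℝ => a j * Complex.exp (Complex.I * (γ j : ℂ) * (x : ℂ) - Complex.I * (ω j : ℂ) * (s : ℂ)))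
        (a j * (-(Complex.I * (ω j : ℂ)))
          * Complex.exp (Complex.I * (γ j : ℂ) * (x : ℂ) - Complex.I * (ω j : ℂ) * (t : ℂ))) t := by
      have h := ((((hcoord t).const_mul (Complex.I * (ω j : ℂ))).const_sub
        (Complex.I * (γ j : ℂ) * (x : ℂ))).cexp).const_mul (a j)
      convert h using 1 <;> try with_reducible_and_instances rfl
      ring
    have ht1 : HasDerivAt (fun s : ℝ => q j x s)
        (a j * Complex.exp (Complex.I * (γ j : ℂ) * (x : ℂ) - Complex.I * (ω j : ℂ) * (t : ℂ))
          * (-(Complex.I * (ω j : ℂ)) * (Complex.I * ((ξ : ℂ) - (γ j : ℂ))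
              + (η : ℂ) * ((Real.tanh (η * (x - 2 * ξ * t) + δ) : ℝ) : ℂ))
            - 2 * (ξ : ℂ) * (η : ℂ) ^ 2
              * (1 - ((Real.tanh (η * (x - 2 * ξ * t) + δ) : ℝ) : ℂ) ^ 2))) t := by
      have h := L3 het hθt (Complex.I * ((ξ : ℂ) - (γ j : ℂ))) (η : ℂ) 0 0
      refine HasDerivAt.congr_of_eventuallyEq (f := fun s : ℝ =>
        a j * Complex.exp (Complex.I * (γ j : ℂ) * (x : ℂ) - Complex.I * (ω j : ℂ) * (s : ℂ))
          * (Complex.I * ((ξ : ℂ) - (γ j : ℂ)) + (η : ℂ) * ((Real.tanh (η * (x - 2 * ξ * s) + δ) : ℝ) : ℂ)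
            + 0 * ((Real.tanh (η * (x - 2 * ξ * s) + δ) : ℝ) : ℂ) ^ 2 + 0 * ((Real.tanh (η * (x - 2 * ξ * s) + δ) : ℝ) : ℂ) ^ 3)) ?_
        (Filter.Eventually.of_forall fun s => ?_)
      · convert h using 1 <;> try with_reducible_and_instances rfl
        push_cast [-Complex.ofReal_tanh]
        ring
      · beta_reduce; rw [hq j x s]; push_cast [-Complex.ofReal_tanh]; ring
    -- nonlinear term
    have hqq : ∀ k, q k x t * (starRingEnd ℂ) (q k x t)
        = ((Complex.normSq (a k) : ℝ) : ℂ) * (((ξ : ℂ) - (γ k : ℂ)) ^ 2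
            + (η : ℂ) ^ 2 * ((Real.tanh (η * (x - 2 * ξ * t) + δ) : ℝ) : ℂ) ^ 2) := by
      intro k
      rw [hq k x t]
      have hz : (starRingEnd ℂ) (Complex.I * (γ k : ℂ) * (x : ℂ) - Complex.I * (ω k : ℂ) * (t : ℂ))
          = -(Complex.I * (γ k : ℂ) * (x : ℂ) - Complex.I * (ω k : ℂ) * (t : ℂ)) := by
        simp [map_sub, map_mul, Complex.conj_I, Complex.conj_ofReal]
        ring
      rw [map_mul, map_mul, ← Complex.exp_conj, hz]
      have hE1 : Complex.exp (Complex.I * (γ k : ℂ) * (x : ℂ) - Complex.I * (ω k : ℂ) * (t : ℂ))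
          * Complex.exp (-(Complex.I * (γ k : ℂ) * (x : ℂ) - Complex.I * (ω k : ℂ) * (t : ℂ))) = 1 := by
        rw [← Complex.exp_add]
        simp
      have hA := Complex.mul_conj (a k)
      have hB : (starRingEnd ℂ) (Complex.I * ((ξ - γ k : ℝ) : ℂ)
            + (η : ℂ) * ((Real.tanh (η * (x - 2 * ξ * t) + δ) : ℝ) : ℂ))
          = -(Complex.I * ((ξ - γ k : ℝ) : ℂ))
            + (η : ℂ) * ((Real.tanh (η * (x - 2 * ξ * t) + δ) : ℝ) : ℂ) := by
        simp [map_add, map_mul, Complex.conj_I, Complex.conj_ofReal, -Complex.ofReal_tanh]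
      rw [hB]
      push_cast [-Complex.ofReal_tanh]
      linear_combination
        (Complex.exp (Complex.I * (γ k : ℂ) * (x : ℂ) - Complex.I * (ω k : ℂ) * (t : ℂ))
          * Complex.exp (-(Complex.I * (γ k : ℂ) * (x : ℂ) - Complex.I * (ω k : ℂ) * (t : ℂ)))
          * (Complex.I * ((ξ : ℂ) - (γ k : ℂ)) + (η : ℂ) * ((Real.tanh (η * (x - 2 * ξ * t) + δ) : ℝ) : ℂ))
          * (-(Complex.I * ((ξ : ℂ) - (γ k : ℂ))) + (η : ℂ) * ((Real.tanh (η * (x - 2 * ξ * t) + δ) : ℝ) : ℂ))) * hA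
        + (((Complex.normSq (a k) : ℝ) : ℂ)
          * (Complex.I * ((ξ : ℂ) - (γ k : ℂ)) + (η : ℂ) * ((Real.tanh (η * (x - 2 * ξ * t) + δ) : ℝ) : ℂ))
          * (-(Complex.I * ((ξ : ℂ) - (γ k : ℂ))) + (η : ℂ) * ((Real.tanh (η * (x - 2 * ξ * t) + δ) : ℝ) : ℂ))) * hE1
        + (-(((Complex.normSq (a k) : ℝ) : ℂ) * ((ξ : ℂ) - (γ k : ℂ)) ^ 2)) * Complex.I_sq
    have hsum : ∑ k, (σ k : ℂ) * (q k x t * (starRingEnd ℂ) (q k x t))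
        = (SA : ℂ) + (η : ℂ) ^ 2 * ((Real.tanh (η * (x - 2 * ξ * t) + δ) : ℝ) : ℂ) ^ 2 := by
      have e1 : ∀ k ∈ Finset.univ, (σ k : ℂ) * (q k x t * (starRingEnd ℂ) (q k x t))
          = ((σ k * Complex.normSq (a k) * (ξ - γ k) ^ 2 : ℝ) : ℂ)
            + ((σ k * Complex.normSq (a k) : ℝ) : ℂ)
              * ((η : ℂ) ^ 2 * ((Real.tanh (η * (x - 2 * ξ * t) + δ) : ℝ) : ℂ) ^ 2) := by
        intro k _
        rw [hqq k]
        push_cast [-Complex.ofReal_tanh]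
        ring
      rw [Finset.sum_congr rfl e1, Finset.sum_add_distrib, ← Finset.sum_mul,
        ← Complex.ofReal_sum, ← Complex.ofReal_sum, ha, hSA, Complex.ofReal_one, one_mul]
    have hω' : ω j = γ j ^ 2 + 2 * SA + 2 * η ^ 2 := by
      rw [hω j]
      have e1 : ∀ k ∈ Finset.univ, σ k * Complex.normSq (a k) * ((ξ - γ k) ^ 2 + η ^ 2)
          = σ k * Complex.normSq (a k) * (ξ - γ k) ^ 2 + (σ k * Complex.normSq (a k)) * η ^ 2 :=
        fun k _ => by ring
      rw [Finset.sum_congr rfl e1, Finset.sum_add_distrib, ← Finset.sum_mul, ha, hSA]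
      ring
    have hωc : ((ω j : ℝ) : ℂ) = (γ j : ℂ) ^ 2 + 2 * (SA : ℂ) + 2 * (η : ℂ) ^ 2 := by
      rw [hω']
      push_cast
      ring
    simp only [pdt1, pdx1]
    rw [ht1.deriv, hx2.deriv, hsum, hq j x t, hωc]
    push_cast [-Complex.ofReal_tanh]
    linear_combination
      (-(a j * Complex.exp (Complex.I * (γ j : ℂ) * (x : ℂ)
          - Complex.I * ((γ j : ℂ) ^ 2 + 2 * (SA : ℂ) + 2 * (η : ℂ) ^ 2) * (t : ℂ)))
        * (2 * (SA : ℂ) + 2 * (η : ℂ) ^ 2)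
        * (Complex.I * ((ξ : ℂ) - (γ j : ℂ))
          + (η : ℂ) * ((Real.tanh (η * (x - 2 * ξ * t) + δ) : ℝ) : ℂ))) * Complex.I_sq
end
end
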